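/- arXiv:math/0505611 — 12 statements merged into one kernel-verified Lean document; each statement's English description precedes it below -/
import Mathlib

section
/- Let λ and μ be integral partitions (finite nonincreasing sequences of positive integers). If λ ≠ μ (as multisets) and λ embeds into μ, then ‖λ‖_p < ‖μ‖_p strictly for every real p with 1 < p < ∞. -/
/-- An integral partition: a finite (nonempty) multiset of positive integers. -/
def IsPartition (l : Multiset ℕ) : Prop := l ≠ 0 ∧ ∀ x ∈ l, 0 < x

/-- `Embeds l m` : the entries of `l` can be grouped and the groups assigned
bijectively (as a multiset) to the bins of `m`, each group fitting in its bin.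
This is the bin-packing embedding `l ↪ m`. -/
def Embeds (l m : Multiset ℕ) : Prop :=
  ∃ T : Multiset (Multiset ℕ × ℕ),
    (T.map Prod.fst).sum = l ∧ T.map Prod.snd = m ∧ ∀ q ∈ T, q.1.sum ≤ q.2

/-- The product of two partitions: all pairwise products of entries. -/
def mprod (l m : Multiset ℕ) : Multiset ℕ := l.bind fun a => m.map (a * ·)

/-- The `n`-fold product `l^{×n}`. -/
def prodPow (l : Multiset ℕ) : ℕ → Multiset ℕ
  | 0 => {1}
  | n + 1 => mprod l (prodPow l n)

/-- The `p`-norm of a partition: `(∑ λᵢ^p)^(1/p)`. -/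
noncomputable def pnorm (l : Multiset ℕ) (p : ℝ) : ℝ :=
  ((l.map fun a => (a : ℝ) ^ p).sum) ^ (1 / p)

/-- `l ⪯_S m` : for every positive `x`, the sum of the entries of `l` that
are `≥ x` is at most the corresponding sum for `m`. -/
def Supermajorized (l m : Multiset ℕ) : Prop :=
  ∀ x : ℕ, 0 < x →
    ((l.filter fun a => x ≤ a).sum ≤ (m.filter fun a => x ≤ a).sum)

/-- `l s↪ m` : there is a partition `ν` with `l×ν ↪ m×ν`. -/
def StablyEmbeds (l m : Multiset ℕ) : Prop :=
  ∃ ν : Multiset ℕ, IsPartition ν ∧ Embeds (mprod l ν) (mprod m ν)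

/-- `l b↪ m` : for every rational `ε > 0` there are positive integers `N, M`
with `M ≤ N(1+ε)` and `l^{×N} ↪ m^{×M}`. -/
def BulkEmbeds (l m : Multiset ℕ) : Prop :=
  ∀ ε : ℚ, 0 < ε → ∃ N M : ℕ, 0 < N ∧ 0 < M ∧ (M : ℚ) ≤ (N : ℚ) * (1 + ε) ∧
    Embeds (prodPow l N) (prodPow m M)

private lemma two_var_pow {x y p : ℝ} (hx : 0 < x) (hy : 0 < y) (hp : 1 < p) :
    x ^ p + y ^ p < (x + y) ^ p := by
  have hxy : 0 < x + y := by linarith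
  have key : ∀ z : ℝ, 0 < z → z ^ p = z * z ^ (p - 1) := by
    intro z hz
    have h := Real.rpow_add hz 1 (p - 1)
    have e : (1 : ℝ) + (p - 1) = p := by ring
    rw [e, Real.rpow_one] at h
    exact h
  have h1 : x ^ (p - 1) < (x + y) ^ (p - 1) :=
    Real.rpow_lt_rpow hx.le (by linarith) (by linarith)
  have h2 : y ^ (p - 1) < (x + y) ^ (p - 1) :=
    Real.rpow_lt_rpow hy.le (by linarith) (by linarith)
  rw [key x hx, key y hy, key (x + y) hxy]
  nlinarith [h1, h2, hx, hy]

private lemma sup_pow (p : ℝ) (hp : 1 < p) (s : Multiset ℕ) (hs : ∀ a ∈ s, 0 < a) :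
    ((s.map fun a : ℕ => (a : ℝ) ^ p).sum ≤ ((s.sum : ℕ) : ℝ) ^ p) ∧
    (2 ≤ Multiset.card s → (s.map fun a : ℕ => (a : ℝ) ^ p).sum < ((s.sum : ℕ) : ℝ) ^ p) := by
  induction s using Multiset.induction with
  | empty => simp [Real.zero_rpow (by positivity : p ≠ 0)]
  | cons a t ih =>
    have ha : 0 < a := hs a (Multiset.mem_cons_self a t)
    have ih' := ih (fun x hx => hs x (Multiset.mem_cons_of_mem hx))
    by_cases ht : t = 0
    · subst ht; simp
    · have htsum : 0 < t.sum := by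
        obtain ⟨x, hx⟩ := Multiset.exists_mem_of_ne_zero ht
        exact lt_of_lt_of_le (hs x (Multiset.mem_cons_of_mem hx)) (Multiset.le_sum_of_mem hx)
      have hA : (0 : ℝ) < (a : ℝ) := by exact_mod_cast ha
      have hS : (0 : ℝ) < ((t.sum : ℕ) : ℝ) := by exact_mod_cast htsum
      have hstrict : ((a ::ₘ t).map fun x : ℕ => (x : ℝ) ^ p).sum <
          (((a ::ₘ t).sum : ℕ) : ℝ) ^ p := by
        rw [Multiset.map_cons, Multiset.sum_cons, Multiset.sum_cons, Nat.cast_add]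
        calc (a : ℝ) ^ p + (t.map fun x : ℕ => (x : ℝ) ^ p).sum
            ≤ (a : ℝ) ^ p + ((t.sum : ℕ) : ℝ) ^ p := by linarith [ih'.1]
          _ < ((a : ℝ) + ((t.sum : ℕ) : ℝ)) ^ p := two_var_pow hA hS hp
      exact ⟨hstrict.le, fun _ => hstrict⟩

private lemma bin_pow (p : ℝ) (hp : 1 < p) (s : Multiset ℕ) (b : ℕ) (hb : 0 < b)
    (hs : ∀ a ∈ s, 0 < a) (hsb : s.sum ≤ b) :
    ((s.map fun a : ℕ => (a : ℝ) ^ p).sum ≤ (b : ℝ) ^ p) ∧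
    (s ≠ {b} → (s.map fun a : ℕ => (a : ℝ) ^ p).sum < (b : ℝ) ^ p) := by
  have hcast : ((s.sum : ℕ) : ℝ) ≤ (b : ℝ) := by exact_mod_cast hsb
  have hmono : ((s.sum : ℕ) : ℝ) ^ p ≤ (b : ℝ) ^ p :=
    Real.rpow_le_rpow (by positivity) hcast (by linarith)
  obtain ⟨h1, h2⟩ := sup_pow p hp s hs
  refine ⟨h1.trans hmono, fun hne => ?_⟩
  rcases Nat.lt_or_ge (Multiset.card s) 2 with hc | hc
  · interval_cases h : Multiset.card s
    · rw [Multiset.card_eq_zero] at h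
      subst h
      simpa using Real.rpow_pos_of_pos (by exact_mod_cast hb : (0:ℝ) < (b:ℝ)) p
    · obtain ⟨a, rfl⟩ := Multiset.card_eq_one.mp h
      have hab : a ≤ b := by simpa using hsb
      have hab' : a ≠ b := by
        intro hh; exact hne (by rw [hh])
      have : (a : ℝ) < (b : ℝ) := by exact_mod_cast lt_of_le_of_ne hab hab'
      simpa using Real.rpow_lt_rpow (by positivity) this (by linarith)
  · exact lt_of_lt_of_le (h2 hc) hmono

private lemma map_sum_sum (f : ℕ → ℝ) (T : Multiset (Multiset ℕ)) :
    ((T.sum).map f).sum = (T.map fun s => (s.map f).sum).sum := by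
  induction T using Multiset.induction with
  | empty => simp
  | cons a t ih => simp [ih]

/-- If `λ ≠ μ` and `λ ↪ μ`, then `‖λ‖_p < ‖μ‖_p` strictly for all `1 < p < ∞`. -/
theorem stmt_0 (l m : Multiset ℕ) (hl : IsPartition l) (hm : IsPartition m)
    (hne : l ≠ m) (hemb : Embeds l m) (p : ℝ) (hp : 1 < p) :
    pnorm l p < pnorm m p := by
  obtain ⟨T, hT1, hT2, hT3⟩ := hemb
  have hq1pos : ∀ q ∈ T, ∀ a ∈ q.1, 0 < a := by
    intro q hq a ha
    apply hl.2
    rw [← hT1]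
    exact Multiset.mem_of_le
      (Multiset.le_sum_of_mem (Multiset.mem_map_of_mem Prod.fst hq)) ha
  have hq2pos : ∀ q ∈ T, 0 < q.2 := by
    intro q hq
    exact hm.2 _ (hT2 ▸ Multiset.mem_map_of_mem Prod.snd hq)
  have hwit : ∃ q ∈ T, q.1 ≠ {q.2} := by
    by_contra h
    push_neg at h
    apply hne
    rw [← hT1, ← hT2]
    have : T.map Prod.fst = T.map fun q => ({q.2} : Multiset ℕ) :=
      Multiset.map_congr rfl (fun q hq => h q hq)
    rw [this]
    have : (T.map fun q => ({q.2} : Multiset ℕ)) =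
        (T.map Prod.snd).map fun b => ({b} : Multiset ℕ) := by
      rw [Multiset.map_map]; rfl
    rw [this, Multiset.sum_map_singleton]
  have hsum : (l.map fun a : ℕ => (a : ℝ) ^ p).sum < (m.map fun a : ℕ => (a : ℝ) ^ p).sum := by
    rw [← hT1, ← hT2, map_sum_sum, Multiset.map_map, Multiset.map_map]
    apply Multiset.sum_lt_sum
    · intro q hq
      exact (bin_pow p hp q.1 q.2 (hq2pos q hq) (hq1pos q hq) (hT3 q hq)).1
    · obtain ⟨q, hq, hq'⟩ := hwit
      exact ⟨q, hq, (bin_pow p hp q.1 q.2 (hq2pos q hq) (hq1pos q hq) (hT3 q hq)).2 hq'⟩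
  have hnn : (0 : ℝ) ≤ (l.map fun a : ℕ => (a : ℝ) ^ p).sum := by
    apply Multiset.sum_nonneg
    intro x hx
    obtain ⟨a, _, rfl⟩ := Multiset.mem_map.mp hx
    positivity
  have hrw : ∀ s : Multiset ℕ, pnorm s p = ((s.map fun a : ℕ => (a : ℝ) ^ p).sum) ^ (1/p) := by
    intro s
    simp [pnorm, Multiset.bind_singleton, Multiset.map_map, Function.comp]
  rw [hrw, hrw]
  exact Real.rpow_lt_rpow hnn hsum (by positivity)
end

section
/- Let λ and μ be integral partitions. If λ ≠ μ (as multisets) and ‖λ‖_p = ‖μ‖_p for some real p with 1 < p < ∞, then for every positive integer n the n-fold product λ^{×n} does not embed into μ^{×n}. -/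
/-!
If `λ^{×n} ↪ μ^{×n}`, both sides have the same `p`-th power sum `‖λ‖_p^{pn} = ‖μ‖_p^{pn}`.
Since `x ↦ x ^ p` is strictly superadditive for `p > 1`, an embedding preserves the `p`-th power
sum only if it places every part alone in a bin of its own size, so `λ^{×n} = μ^{×n}`.
To take `n`-th roots, send a partition to its Dirichlet polynomial `∑ aᵢ^{-s}`, realised in the
domain `ℤ[ℝ]`: products of partitions become products, and `Λ^n = M^n` forces `Λ = M` because
the cofactor `∑ Λ^i M^{n-1-i}` of `Λ^n - M^n` has positive coefficient sum.
-/

lemma prodPow_pos {l : Multiset ℕ} (hl : ∀ a ∈ l, 0 < a) (n : ℕ) : ∀ a ∈ prodPow l n, 0 < a := by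
  induction n with
  | zero => simp [prodPow]
  | succ n ih =>
    simp only [prodPow, mprod, Multiset.mem_bind, Multiset.mem_map]
    rintro _ ⟨a, ha, b, hb, rfl⟩
    exact Nat.mul_pos (hl a ha) (ih b hb)

noncomputable def psum (w : Multiset ℕ) (p : ℝ) : ℝ :=
  (w.map fun a : ℕ => (a : ℝ) ^ p).sum

section PowerSum

variable {p : ℝ}

@[simp]
lemma psum_zero : psum 0 p = 0 := rfl

@[simp]
lemma psum_cons (a : ℕ) (w : Multiset ℕ) : psum (a ::ₘ w) p = (a : ℝ) ^ p + psum w p := by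
  simp [psum]

lemma psum_add (u v : Multiset ℕ) : psum (u + v) p = psum u p + psum v p := by
  simp [psum]

lemma psum_sum (S : Multiset (Multiset ℕ)) : psum S.sum p = (S.map (psum · p)).sum := by
  induction S using Multiset.induction_on with
  | empty => simp
  | cons w S ih => simp [psum_add, ih]

lemma psum_nonneg (w : Multiset ℕ) : 0 ≤ psum w p :=
  Multiset.sum_nonneg fun _ hx => by
    obtain ⟨a, -, rfl⟩ := Multiset.mem_map.1 hx
    positivity

lemma pnorm_eq_psum_rpow (l : Multiset ℕ) : pnorm l p = psum l p ^ (1 / p) := by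
  simp [pnorm, psum]

lemma psum_eq_of_pnorm_eq {l m : Multiset ℕ} (hp : p ≠ 0) (h : pnorm l p = pnorm m p) :
    psum l p = psum m p := by
  rw [pnorm_eq_psum_rpow, pnorm_eq_psum_rpow] at h
  exact Real.rpow_left_injOn (one_div_ne_zero hp) (psum_nonneg l) (psum_nonneg m) h

lemma psum_mprod (u v : Multiset ℕ) : psum (mprod u v) p = psum u p * psum v p := by
  induction u using Multiset.induction_on with
  | empty => simp [mprod]
  | cons a u ih =>
    rw [mprod, Multiset.cons_bind, ← mprod, psum_add, ih, psum_cons, add_mul]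
    simp [psum, Multiset.map_map, ← Multiset.sum_map_mul_left, Real.mul_rpow]

lemma psum_prodPow (l : Multiset ℕ) (n : ℕ) : psum (prodPow l n) p = psum l p ^ n := by
  induction n with
  | zero => simp [prodPow, psum]
  | succ n ih => rw [prodPow, psum_mprod, ih, pow_succ']

lemma add_rpow_lt_rpow_add {x y : ℝ} (hx : 0 < x) (hy : 0 < y) (hp : 1 < p) :
    x ^ p + y ^ p < (x + y) ^ p := by
  have hsplit {z : ℝ} (hz : 0 < z) : z ^ p = z * z ^ (p - 1) := by
    rw [← Real.rpow_one_add' hz.le (by linarith), add_sub_cancel]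
  have hxy : 0 < x + y := by linarith
  calc x ^ p + y ^ p = x * x ^ (p - 1) + y * y ^ (p - 1) := by rw [hsplit hx, hsplit hy]
    _ < x * (x + y) ^ (p - 1) + y * (x + y) ^ (p - 1) := by
        gcongr <;> linarith
    _ = (x + y) ^ p := by rw [hsplit hxy]; ring

lemma psum_le_rpow_sum (hp : 1 ≤ p) (w : Multiset ℕ) : psum w p ≤ (w.sum : ℝ) ^ p := by
  induction w using Multiset.induction_on with
  | empty => simp [Real.zero_rpow (by linarith : p ≠ 0)]
  | cons a w ih =>
    rw [psum_cons, Multiset.sum_cons, Nat.cast_add]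
    calc (a : ℝ) ^ p + psum w p ≤ (a : ℝ) ^ p + (w.sum : ℝ) ^ p := by gcongr
      _ ≤ ((a : ℝ) + w.sum) ^ p :=
        NNReal.add_rpow_le_rpow_add ⟨a, a.cast_nonneg⟩ ⟨w.sum, (w.sum).cast_nonneg⟩ hp

lemma psum_le_rpow_of_sum_le (hp : 1 ≤ p) {w : Multiset ℕ} {b : ℕ} (h : w.sum ≤ b) :
    psum w p ≤ (b : ℝ) ^ p :=
  (psum_le_rpow_sum hp w).trans (by gcongr)

lemma eq_singleton_of_psum_eq_rpow (hp : 1 < p) {w : Multiset ℕ} {b : ℕ} (hw : ∀ a ∈ w, 0 < a)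
    (hb : 0 < b) (hsum : w.sum ≤ b) (heq : psum w p = (b : ℝ) ^ p) : w = {b} := by
  rcases Multiset.empty_or_exists_mem w with rfl | ⟨a, ha⟩
  · exact absurd heq (Real.rpow_pos_of_pos (by exact_mod_cast hb) p).ne
  obtain ⟨t, rfl⟩ := Multiset.exists_cons_of_mem ha
  have ha : 0 < a := hw a (Multiset.mem_cons_self a t)
  rcases Multiset.empty_or_exists_mem t with rfl | ⟨c, hc⟩
  · rw [psum_cons, psum_zero, add_zero,
      Real.rpow_left_inj a.cast_nonneg b.cast_nonneg (by linarith)] at heq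
    rw [Nat.cast_inj.1 heq]
    rfl
  · have ht : 0 < t.sum := (hw c (Multiset.mem_cons_of_mem hc)).trans_le (Multiset.le_sum_of_mem hc)
    rw [Multiset.sum_cons] at hsum
    refine absurd heq (ne_of_lt ?_)
    calc psum (a ::ₘ t) p ≤ (a : ℝ) ^ p + (t.sum : ℝ) ^ p := by
          rw [psum_cons]; gcongr; exact psum_le_rpow_sum hp.le t
      _ < ((a : ℝ) + t.sum) ^ p := add_rpow_lt_rpow_add (by positivity) (by positivity) hp
      _ ≤ (b : ℝ) ^ p := by gcongr; exact_mod_cast hsum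

end PowerSum

lemma Embeds.eq_of_psum_eq {L M : Multiset ℕ} {p : ℝ} (hE : Embeds L M) (hL : ∀ a ∈ L, 0 < a)
    (hM : ∀ b ∈ M, 0 < b) (hp : 1 < p) (h : psum L p = psum M p) : L = M := by
  obtain ⟨T, rfl, rfl, hfit⟩ := hE
  have hbin : ∀ q ∈ T, psum q.1 p ≤ (q.2 : ℝ) ^ p := fun q hq =>
    psum_le_rpow_of_sum_le hp.le (hfit q hq)
  have hsum : (T.map fun q => psum q.1 p).sum = (T.map fun q => (q.2 : ℝ) ^ p).sum := by
    rw [psum_sum, Multiset.map_map] at h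
    exact h.trans (by simp [psum, Multiset.map_map])
  have htight : ∀ q ∈ T, psum q.1 p = (q.2 : ℝ) ^ p := by
    by_contra! ⟨q, hq, hlt⟩
    exact hsum.not_lt (Multiset.sum_lt_sum hbin ⟨q, hq, (hbin q hq).lt_of_ne hlt⟩)
  have hsingle : ∀ q ∈ T, q.1 = {q.2} := fun q hq =>
    eq_singleton_of_psum_eq_rpow hp
      (fun a ha => hL a (Multiset.mem_join.2 ⟨q.1, Multiset.mem_map_of_mem _ hq, ha⟩))
      (hM _ (Multiset.mem_map_of_mem _ hq)) (hfit q hq) (htight q hq)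
  rw [Multiset.map_congr rfl hsingle]
  simpa [Multiset.map_map, Function.comp_def] using Multiset.sum_map_singleton (T.map Prod.snd)

theorem eq_of_pow_eq_of_map_pos {R S : Type*} [CommRing R] [NoZeroDivisors R] [Semiring S]
    [PartialOrder S] [IsStrictOrderedRing S] (f : R →+* S) {x y : R} (hx : 0 < f x)
    (hy : 0 < f y) {n : ℕ} (hn : n ≠ 0) (h : x ^ n = y ^ n) : x = y := by
  have hgeom : (∑ i ∈ Finset.range n, x ^ i * y ^ (n - 1 - i)) * (x - y) = 0 := by
    rw [geom_sum₂_mul, h, sub_self]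
  have hsum : f (∑ i ∈ Finset.range n, x ^ i * y ^ (n - 1 - i)) ≠ 0 := by
    rw [map_sum]
    refine (Finset.sum_pos (fun i _ => ?_) (Finset.nonempty_range_iff.2 hn)).ne'
    rw [map_mul, map_pow, map_pow]
    positivity
  exact sub_eq_zero.1 ((mul_eq_zero.1 hgeom).resolve_left fun h0 => hsum (by rw [h0, map_zero]))

noncomputable def augmentation (R G : Type*) [CommSemiring R] [AddMonoid G] :
    AddMonoidAlgebra R G →+* R :=
  (AddMonoidAlgebra.lift R R G 1).toRingHom

@[simp]
lemma augmentation_single {R G : Type*} [CommSemiring R] [AddMonoid G] (g : G) (r : R) :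
    augmentation R G (AddMonoidAlgebra.single g r) = r := by
  simp [augmentation]

noncomputable def dirichletPoly (w : Multiset ℕ) : AddMonoidAlgebra ℤ ℝ :=
  (w.map fun a : ℕ => AddMonoidAlgebra.single (Real.log a) 1).sum

section DirichletPoly

variable {u v w : Multiset ℕ}

@[simp]
lemma dirichletPoly_zero : dirichletPoly 0 = 0 := rfl

@[simp]
lemma dirichletPoly_cons (a : ℕ) (w : Multiset ℕ) :
    dirichletPoly (a ::ₘ w) = AddMonoidAlgebra.single (Real.log a) 1 + dirichletPoly w := by
  simp [dirichletPoly]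

lemma dirichletPoly_add (u v : Multiset ℕ) :
    dirichletPoly (u + v) = dirichletPoly u + dirichletPoly v := by
  simp [dirichletPoly]

lemma dirichletPoly_mprod (hu : ∀ a ∈ u, 0 < a) (hv : ∀ b ∈ v, 0 < b) :
    dirichletPoly (mprod u v) = dirichletPoly u * dirichletPoly v := by
  induction u using Multiset.induction_on with
  | empty => simp [mprod]
  | cons a u ih =>
    have ha : (a : ℝ) ≠ 0 := by exact_mod_cast (hu a (Multiset.mem_cons_self a u)).ne'
    have hmap : dirichletPoly (v.map (a * ·))
        = AddMonoidAlgebra.single (Real.log a) 1 * dirichletPoly v := by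
      simp only [dirichletPoly, Multiset.map_map, ← Multiset.sum_map_mul_left]
      refine congrArg _ (Multiset.map_congr rfl fun b hb => ?_)
      have hb : (b : ℝ) ≠ 0 := by exact_mod_cast (hv b hb).ne'
      simp [AddMonoidAlgebra.single_mul_single, Real.log_mul ha hb]
    rw [mprod, Multiset.cons_bind, ← mprod, dirichletPoly_add, hmap,
      ih fun b hb => hu b (Multiset.mem_cons_of_mem hb), dirichletPoly_cons, add_mul]

lemma dirichletPoly_prodPow {l : Multiset ℕ} (hl : ∀ a ∈ l, 0 < a) (n : ℕ) :
    dirichletPoly (prodPow l n) = dirichletPoly l ^ n := by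
  induction n with
  | zero => simp [prodPow, dirichletPoly, AddMonoidAlgebra.one_def]
  | succ n ih => rw [prodPow, dirichletPoly_mprod hl (prodPow_pos hl n), ih, pow_succ']

lemma coeff_dirichletPoly_log (hw : ∀ a ∈ w, 0 < a) {k : ℕ} (hk : 0 < k) :
    (dirichletPoly w).coeff (Real.log k) = w.count k := by
  induction w using Multiset.induction_on with
  | empty => simp
  | cons a w ih =>
    have hlog : Real.log a = Real.log k ↔ a = k := by
      have := Real.log_injOn_pos.eq_iff (x := (a : ℝ)) (y := (k : ℝ))
        (Set.mem_Ioi.2 (by exact_mod_cast hw a (Multiset.mem_cons_self a w)))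
        (Set.mem_Ioi.2 (by exact_mod_cast hk))
      exact_mod_cast this
    rw [dirichletPoly_cons, AddMonoidAlgebra.coeff_add, Finsupp.add_apply,
      ih fun b hb => hw b (Multiset.mem_cons_of_mem hb), AddMonoidAlgebra.coeff_single,
      Finsupp.single_apply, Multiset.count_cons]
    simp only [hlog, eq_comm (a := k)]
    push_cast
    ring

lemma eq_of_dirichletPoly_eq (hu : ∀ a ∈ u, 0 < a) (hv : ∀ b ∈ v, 0 < b)
    (h : dirichletPoly u = dirichletPoly v) : u = v := by
  ext k
  rcases k.eq_zero_or_pos with rfl | hk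
  · rw [Multiset.count_eq_zero.2 fun h0 => (hu 0 h0).false,
      Multiset.count_eq_zero.2 fun h0 => (hv 0 h0).false]
  · exact_mod_cast (coeff_dirichletPoly_log hu hk).symm.trans
      ((congrArg (·.coeff (Real.log k)) h).trans (coeff_dirichletPoly_log hv hk))


lemma augmentation_dirichletPoly (w : Multiset ℕ) :
    augmentation ℤ ℝ (dirichletPoly w) = w.card := by
  induction w using Multiset.induction_on with
  | empty => simp
  | cons a w ih => rw [dirichletPoly_cons, map_add, ih, augmentation_single, Multiset.card_cons,
      Nat.cast_succ, add_comm]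

end DirichletPoly

/-- If `λ ≠ μ` and `‖λ‖_p = ‖μ‖_p` for some `1 < p < ∞`, then `λ^{×n}` does not
embed into `μ^{×n}` for any positive `n`. -/
theorem stmt_1 (l m : Multiset ℕ) (hl : IsPartition l) (hm : IsPartition m)
    (hne : l ≠ m) (p : ℝ) (hp : 1 < p) (heq : pnorm l p = pnorm m p)
    (n : ℕ) (hn : 0 < n) :
    ¬ Embeds (prodPow l n) (prodPow m n) := by
  intro hE
  have hpow : prodPow l n = prodPow m n :=
    hE.eq_of_psum_eq (prodPow_pos hl.2 n) (prodPow_pos hm.2 n) hp <| by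
      rw [psum_prodPow, psum_prodPow, psum_eq_of_pnorm_eq (by linarith) heq]
  have hcard {w : Multiset ℕ} (hw : IsPartition w) : 0 < augmentation ℤ ℝ (dirichletPoly w) := by
    rw [augmentation_dirichletPoly]
    exact_mod_cast Multiset.card_pos.2 hw.1
  refine hne (eq_of_dirichletPoly_eq hl.2 hm.2 ?_)
  refine eq_of_pow_eq_of_map_pos (augmentation ℤ ℝ) (hcard hl) (hcard hm) hn.ne' ?_
  rw [← dirichletPoly_prodPow hl.2, ← dirichletPoly_prodPow hm.2, hpow]
end

section
/- Let λ and μ be integral partitions. If λ ≠ μ (as multisets) and ‖λ‖_p = ‖μ‖_p for some real p with 1 < p < ∞, then λ does not stably embed into μ; that is, there is no partition ν with λ×ν ↪ μ×ν. -/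
section Stmt2Aux
open Real Multiset

/-- Power-sum functional. -/
noncomputable def S (p : ℝ) (s : Multiset ℕ) : ℝ := (s.map (fun a : ℕ => (a:ℝ) ^ p)).sum

lemma coe_map_fix (s : Multiset ℕ) (p : ℝ) :
    ((s.map fun a => (a:ℝ) ^ p).sum) = S p s := by
  show ((s.bind fun a => {((a:ℕ):ℝ)}).map _).sum = _
  rw [Multiset.bind_singleton, Multiset.map_map]
  rfl

lemma pnorm_eq (l : Multiset ℕ) (p : ℝ) : pnorm l p = (S p l) ^ (1/p) := by
  rw [pnorm, coe_map_fix]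

lemma strict_rpow (x y p : ℝ) (hx : 0 < x) (hy : 0 < y) (hp : 1 < p) :
    x ^ p + y ^ p < (x + y) ^ p := by
  have hxy : (0:ℝ) < x + y := by linarith
  have h1 : (x + y) ^ p = x * (x+y)^(p-1) + y * (x+y)^(p-1) := by
    rw [← add_mul]
    rw [← Real.rpow_one_add' (le_of_lt hxy) (by linarith)]
    ring_nf
  have h2 : x ^ (p-1) < (x+y)^(p-1) := Real.rpow_lt_rpow (le_of_lt hx) (by linarith) (by linarith)
  have h3 : y ^ (p-1) < (x+y)^(p-1) := Real.rpow_lt_rpow (le_of_lt hy) (by linarith) (by linarith)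
  have hx1 : x * x ^ (p-1) = x ^ p := by
    rw [← Real.rpow_one_add' (le_of_lt hx) (by linarith)]; ring_nf
  have hy1 : y * y ^ (p-1) = y ^ p := by
    rw [← Real.rpow_one_add' (le_of_lt hy) (by linarith)]; ring_nf
  rw [h1, ← hx1, ← hy1]
  have := mul_lt_mul_of_pos_left h2 hx
  have := mul_lt_mul_of_pos_left h3 hy
  linarith

lemma S_nonneg (p : ℝ) (s : Multiset ℕ) : 0 ≤ S p s := by
  apply Multiset.sum_nonneg
  intro x hx
  obtain ⟨a, _, rfl⟩ := Multiset.mem_map.mp hx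
  positivity

lemma sum_rpow_le (p : ℝ) (hp : 1 < p) (s : Multiset ℕ) :
    S p s ≤ ((s.sum : ℕ) : ℝ) ^ p := by
  induction s using Multiset.induction_on with
  | empty => simp [S, Real.zero_rpow (by positivity : p ≠ 0)]
  | cons a t ih =>
    rw [S, Multiset.map_cons, Multiset.sum_cons, Multiset.sum_cons, Nat.cast_add]
    calc (a:ℝ)^p + (t.map (fun a : ℕ => (a:ℝ)^p)).sum ≤ (a:ℝ)^p + ((t.sum:ℕ):ℝ)^p := by
          have := ih; rw [S] at this; linarith
    _ ≤ ((a:ℝ) + (t.sum:ℕ)) ^ p := by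
        rcases Nat.eq_zero_or_pos a with h | h
        · subst h; simp [Real.zero_rpow (by positivity : p ≠ 0)]
        rcases Nat.eq_zero_or_pos t.sum with h2 | h2
        · rw [h2]; simp [Real.zero_rpow (by positivity : p ≠ 0)]
        exact le_of_lt (strict_rpow _ _ p (by exact_mod_cast h) (by exact_mod_cast h2) hp)

lemma group_eq_singleton (p : ℝ) (hp : 1 < p) (s : Multiset ℕ) (b : ℕ)
    (hpos : ∀ x ∈ s, 0 < x) (hb : 0 < b) (hsum : s.sum ≤ b)
    (heq : S p s = (b:ℝ) ^ p) : s = {b} := by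
  have hbp : (0:ℝ) < (b:ℝ) ^ p := Real.rpow_pos_of_pos (by exact_mod_cast hb) p
  rcases Multiset.empty_or_exists_mem s with h | ⟨a, ha⟩
  · exfalso; rw [h] at heq; simp [S] at heq; linarith
  obtain ⟨t, rfl⟩ := Multiset.exists_cons_of_mem ha
  have hsumn : a + t.sum ≤ b := by simpa using hsum
  have hsums : (a:ℝ) + (t.sum : ℕ) ≤ (b:ℝ) := by exact_mod_cast hsumn
  rcases Multiset.empty_or_exists_mem t with h | ⟨c, hc⟩
  · subst h
    rw [S, Multiset.map_cons, Multiset.map_zero, Multiset.sum_cons, Multiset.sum_zero,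
      add_zero] at heq
    have hab : a = b := by
      by_contra hne
      have hlt : a < b := lt_of_le_of_ne (by simpa using hsum) hne
      have : ((a:ℝ)) ^ p < (b:ℝ) ^ p :=
        Real.rpow_lt_rpow (by positivity) (by exact_mod_cast hlt) (by linarith)
      linarith
    subst hab; rfl
  · exfalso
    have hapos : (0:ℝ) < a := by exact_mod_cast hpos a (Multiset.mem_cons_self a t)
    have htpos : (0:ℝ) < ((t.sum : ℕ) : ℝ) := by
      have h0 : 0 < t.sum :=
        lt_of_lt_of_le (hpos c (Multiset.mem_cons_of_mem hc)) (Multiset.le_sum_of_mem hc)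
      exact_mod_cast h0
    have h1 : S p (a ::ₘ t) ≤ (a:ℝ)^p + ((t.sum:ℕ):ℝ)^p := by
      rw [S, Multiset.map_cons, Multiset.sum_cons]
      have := sum_rpow_le p hp t
      rw [S] at this; linarith
    have h2 : (a:ℝ)^p + ((t.sum:ℕ):ℝ)^p < ((a:ℝ) + (t.sum:ℕ))^p :=
      strict_rpow _ _ p hapos htpos hp
    have h3 : ((a:ℝ) + (t.sum:ℕ))^p ≤ (b:ℝ)^p :=
      Real.rpow_le_rpow (by positivity) hsums (by linarith)
    linarith

lemma eq_of_sum_eq {α : Type*} (T : Multiset α) (f g : α → ℝ)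
    (h : ∀ q ∈ T, f q ≤ g q) (hsum : (T.map f).sum = (T.map g).sum) :
    ∀ q ∈ T, f q = g q := by
  induction T using Multiset.induction_on with
  | empty => simp
  | cons a t ih =>
    simp only [Multiset.map_cons, Multiset.sum_cons] at hsum
    have h1 : f a ≤ g a := h a (Multiset.mem_cons_self a t)
    have h2 : ∀ q ∈ t, f q ≤ g q := fun q hq => h q (Multiset.mem_cons_of_mem hq)
    have h3 : (t.map f).sum ≤ (t.map g).sum := by
      apply Multiset.sum_le_sum_of_rel_le
      rw [Multiset.rel_map]
      exact Multiset.rel_refl_of_refl_on h2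
    have hfa : f a = g a := by linarith
    have hts : (t.map f).sum = (t.map g).sum := by linarith
    intro q hq
    rcases Multiset.mem_cons.mp hq with rfl | hq
    · exact hfa
    · exact ih h2 hts q hq

lemma S_add (p : ℝ) (s t : Multiset ℕ) : S p (s + t) = S p s + S p t := by
  simp [S]

lemma S_sum (p : ℝ) (T : Multiset (Multiset ℕ)) :
    S p T.sum = (T.map (S p)).sum := by
  induction T using Multiset.induction_on with
  | empty => simp [S]
  | cons a t ih => simp [Multiset.sum_cons, S_add, ih]

lemma mem_mprod {l m : Multiset ℕ} {x : ℕ} :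
    x ∈ mprod l m ↔ ∃ a ∈ l, ∃ b ∈ m, a * b = x := by
  simp [mprod, Multiset.mem_bind, Multiset.mem_map, eq_comm]

lemma mprod_pos {l m : Multiset ℕ} (hl : ∀ x ∈ l, 0 < x) (hm : ∀ x ∈ m, 0 < x) :
    ∀ x ∈ mprod l m, 0 < x := by
  intro x hx
  obtain ⟨a, ha, b, hb, rfl⟩ := mem_mprod.mp hx
  exact Nat.mul_pos (hl a ha) (hm b hb)

lemma S_mprod (p : ℝ) (l m : Multiset ℕ) : S p (mprod l m) = S p l * S p m := by
  rw [S, mprod, Multiset.map_bind, Multiset.sum_bind]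
  have : ∀ a : ℕ, ((m.map (a * ·)).map (fun x : ℕ => (x:ℝ)^p)).sum = (a:ℝ)^p * S p m := by
    intro a
    rw [Multiset.map_map]
    have : ((fun x : ℕ => (x:ℝ)^p) ∘ (a * ·)) = fun b : ℕ => (a:ℝ)^p * (b:ℝ)^p := by
      funext b
      simp only [Function.comp_apply]
      push_cast
      rw [Real.mul_rpow (by positivity) (by positivity)]
    rw [this, Multiset.sum_map_mul_left]
    rfl
  simp only [this]
  rw [Multiset.sum_map_mul_right]
  rfl

/-- Encoding a multiset of positive naturals into `MvPolynomial ℕ ℤ`. -/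
noncomputable def F (s : Multiset ℕ) : MvPolynomial ℕ ℤ :=
  (s.map fun a => MvPolynomial.monomial (Nat.factorization a) (1:ℤ)).sum

lemma F_mprod (l m : Multiset ℕ) (hl : ∀ x ∈ l, 0 < x) (hm : ∀ x ∈ m, 0 < x) :
    F (mprod l m) = F l * F m := by
  rw [F, mprod, Multiset.map_bind, Multiset.sum_bind]
  have key : ∀ a ∈ l, ((m.map (a * ·)).map
      (fun x => MvPolynomial.monomial (Nat.factorization x) (1:ℤ))).sum
      = MvPolynomial.monomial (Nat.factorization a) (1:ℤ) * F m := by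
    intro a ha
    rw [F, ← Multiset.sum_map_mul_left, Multiset.map_map]
    congr 1
    apply Multiset.map_congr rfl
    intro b hb
    simp only [Function.comp_apply]
    rw [MvPolynomial.monomial_mul, one_mul,
      Nat.factorization_mul (hl a ha).ne' (hm b hb).ne']
  calc (l.map fun a => ((m.map (a * ·)).map
          (fun x => MvPolynomial.monomial (Nat.factorization x) (1:ℤ))).sum).sum
      = (l.map fun a => MvPolynomial.monomial (Nat.factorization a) (1:ℤ) * F m).sum :=
        congrArg Multiset.sum (Multiset.map_congr rfl key)
    _ = (l.map fun a => MvPolynomial.monomial (Nat.factorization a) (1:ℤ)).sum * F m :=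
        Multiset.sum_map_mul_right
    _ = F l * F m := rfl

lemma F_ne_zero (s : Multiset ℕ) (hs : s ≠ 0) : F s ≠ 0 := by
  intro h
  have := congrArg (MvPolynomial.eval (fun _ => (1:ℤ))) h
  rw [F, map_multiset_sum, Multiset.map_map] at this
  have heval : ∀ a : ℕ, MvPolynomial.eval (fun _ => (1:ℤ))
      (MvPolynomial.monomial (Nat.factorization a) (1:ℤ)) = 1 := by
    intro a; rw [MvPolynomial.eval_monomial]; simp [Finsupp.prod]
  simp only [Function.comp_apply, heval] at this
  rw [Multiset.map_const', Multiset.sum_replicate] at this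
  simp at this
  exact hs this

lemma coeff_F (s : Multiset ℕ) (d : ℕ →₀ ℕ) :
    (F s).coeff d = ((s.filter fun a => Nat.factorization a = d).card : ℤ) := by
  induction s using Multiset.induction_on with
  | empty => simp [F]
  | cons a t ih =>
    rw [F, Multiset.map_cons, Multiset.sum_cons, MvPolynomial.coeff_add, ← F, ih,
      MvPolynomial.coeff_monomial, Multiset.filter_cons]
    by_cases h : Nat.factorization a = d
    · simp [h, add_comm]
    · simp [h]

lemma F_inj (s t : Multiset ℕ) (hs : ∀ x ∈ s, 0 < x) (ht : ∀ x ∈ t, 0 < x)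
    (h : F s = F t) : s = t := by
  ext a
  rcases Nat.eq_zero_or_pos a with rfl | hapos
  · rw [Multiset.count_eq_zero_of_notMem, Multiset.count_eq_zero_of_notMem]
    · intro hmem; exact absurd (ht 0 hmem) (lt_irrefl 0)
    · intro hmem; exact absurd (hs 0 hmem) (lt_irrefl 0)
  have hcoeff := congrArg (fun q => MvPolynomial.coeff (Nat.factorization a) q) h
  simp only [coeff_F] at hcoeff
  have hcount : ∀ (u : Multiset ℕ), (∀ x ∈ u, 0 < x) →
      (u.filter fun x => Nat.factorization x = Nat.factorization a) = u.filter (a = ·) := by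
    intro u hu
    apply Multiset.filter_congr
    intro x hx
    constructor
    · intro hfx
      exact (Nat.factorization_inj (hu x hx).ne' hapos.ne' hfx).symm
    · intro hxa; rw [← hxa]
  rw [hcount s hs, hcount t ht] at hcoeff
  have : (s.filter (a = ·)).card = (t.filter (a = ·)).card := by exact_mod_cast hcoeff
  simpa [Multiset.count_eq_card_filter_eq] using this

end Stmt2Aux

/-- If `λ ≠ μ` and `‖λ‖_p = ‖μ‖_p` for some `1 < p < ∞`, then `λ` does not
stably embed into `μ`. -/
theorem stmt_2 (l m : Multiset ℕ) (hl : IsPartition l) (hm : IsPartition m)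
    (hne : l ≠ m) (p : ℝ) (hp : 1 < p) (heq : pnorm l p = pnorm m p) :
    ¬ StablyEmbeds l m := by
  rintro ⟨ν, hν, T, hT1, hT2, hT3⟩
  have hp0 : p ≠ 0 := by positivity
  -- power sums of l and m are equal
  have hS : S p l = S p m := by
    have h1 := congrArg (fun x => x ^ p) heq
    simp only [pnorm_eq] at h1
    rwa [← Real.rpow_mul (S_nonneg p l), ← Real.rpow_mul (S_nonneg p m),
      one_div_mul_cancel hp0, Real.rpow_one, Real.rpow_one] at h1
  have hLpos : ∀ x ∈ mprod l ν, 0 < x := mprod_pos hl.2 hν.2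
  have hMpos : ∀ x ∈ mprod m ν, 0 < x := mprod_pos hm.2 hν.2
  have hSLM : S p (mprod l ν) = S p (mprod m ν) := by rw [S_mprod, S_mprod, hS]
  -- pointwise inequality over T
  have hle : ∀ q ∈ T, S p q.1 ≤ ((q.2 : ℕ) : ℝ) ^ p := by
    intro q hq
    have hq2 : q.2 ∈ mprod m ν := by
      rw [← hT2]; exact Multiset.mem_map_of_mem _ hq
    have hsum : ((q.1.sum : ℕ) : ℝ) ≤ ((q.2 : ℕ) : ℝ) := by exact_mod_cast hT3 q hq
    exact le_trans (sum_rpow_le p hp q.1)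
      (Real.rpow_le_rpow (by positivity) hsum (by linarith))
  -- sums over T agree
  have hsumL : (T.map fun q => S p q.1).sum = S p (mprod l ν) := by
    rw [← hT1, S_sum, Multiset.map_map]
    rfl
  have hsumM : (T.map fun q => ((q.2 : ℕ) : ℝ) ^ p).sum = S p (mprod m ν) := by
    rw [← hT2, S, Multiset.map_map]
    rfl
  have hptwise := eq_of_sum_eq T (fun q => S p q.1) (fun q => ((q.2:ℕ):ℝ)^p) hle
    (by rw [hsumL, hsumM, hSLM])
  -- each group is a singleton
  have hsingle : ∀ q ∈ T, q.1 = {q.2} := by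
    intro q hq
    apply group_eq_singleton p hp q.1 q.2 _ _ (hT3 q hq) (hptwise q hq)
    · intro x hx
      apply hLpos
      rw [← hT1]
      exact Multiset.mem_of_le (Multiset.le_sum_of_mem (Multiset.mem_map_of_mem _ hq)) hx
    · exact hMpos q.2 (by rw [← hT2]; exact Multiset.mem_map_of_mem _ hq)
  -- hence mprod l ν = mprod m ν
  have hLM : mprod l ν = mprod m ν := by
    rw [← hT1, ← hT2, Multiset.map_congr rfl hsingle]
    clear hsingle hptwise hsumL hsumM hle hT1 hT2 hT3
    induction T using Multiset.induction_on with
    | empty => simp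
    | cons a t ih => simp [ih]
  -- cancel ν via the polynomial encoding
  have hF : F l * F ν = F m * F ν := by
    rw [← F_mprod l ν hl.2 hν.2, ← F_mprod m ν hm.2 hν.2, hLM]
  have hFlm : F l = F m := mul_right_cancel₀ (F_ne_zero ν hν.1) hF
  exact hne (F_inj l m hl.2 hm.2 hFlm)
end

section
/- Let λ and μ be integral partitions. If λ embeds into μ, then λ is supermajorized by μ: for every positive integer x, ∑_{λ_i ≥ x} λ_i ≤ ∑_{μ_j ≥ x} μ_j. -/
/-- If `λ ↪ μ`, then `λ ⪯_S μ`. -/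
theorem stmt_7 (l m : Multiset ℕ) (hl : IsPartition l) (hm : IsPartition m)
    (hemb : Embeds l m) :
    Supermajorized l m := by
  obtain ⟨T, hsum, hsnd, hle⟩ := hemb
  intro x hx
  subst hsum; subst hsnd
  clear hl hm
  induction T using Multiset.induction with
  | empty => simp
  | cons q T ih =>
    have hq := hle q (Multiset.mem_cons_self _ _)
    have hrest := ih (fun p hp => hle p (Multiset.mem_cons_of_mem hp))
    simp only [Multiset.map_cons, Multiset.sum_cons, Multiset.filter_add,
      Multiset.sum_add, Multiset.filter_cons]
    have hone : (Multiset.filter (fun a => x ≤ a) q.1).sum ≤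
        (if x ≤ q.2 then ({q.2} : Multiset ℕ) else 0).sum := by
      rcases Multiset.empty_or_exists_mem (Multiset.filter (fun a => x ≤ a) q.1) with h | ⟨a, ha⟩
      · simp [h]
      · have haq : a ∈ q.1 := Multiset.mem_of_mem_filter ha
        have hxa : x ≤ a := (Multiset.mem_filter.mp ha).2
        have : x ≤ q.2 := hxa.trans ((Multiset.single_le_sum (fun _ _ => Nat.zero_le _) _ haq).trans hq)
        simp only [if_pos this, Multiset.sum_singleton]
        refine le_trans ?_ hq
        calc (Multiset.filter (fun a => x ≤ a) q.1).sum
            ≤ (Multiset.filter (fun a => x ≤ a) q.1).sum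
              + (Multiset.filter (fun a => ¬ x ≤ a) q.1).sum := Nat.le_add_right _ _
          _ = q.1.sum := by rw [← Multiset.sum_add, Multiset.filter_add_not]
    exact Nat.add_le_add hone hrest
end

section
/- Let λ and μ be integral partitions. If λ is supermajorized by μ, then ‖λ‖_p ≤ ‖μ‖_p for every real p with 1 ≤ p < ∞ and the largest entry of λ is at most the largest entry of μ. -/
/-- If `λ ⪯_S μ`, then `‖λ‖_p ≤ ‖μ‖_p` for all `1 ≤ p < ∞` and the largest
entry of `λ` is at most the largest entry of `μ`. -/
theorem stmt_8 (l m : Multiset ℕ) (hl : IsPartition l) (hm : IsPartition m)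
    (hsm : Supermajorized l m) :
    (∀ p : ℝ, 1 ≤ p → pnorm l p ≤ pnorm m p) ∧ l.sup ≤ m.sup := by
  obtain ⟨hl0, hlpos⟩ := hl
  obtain ⟨hm0, hmpos⟩ := hm
  -- every entry of l is ≤ m.sup
  have key : ∀ a ∈ l, a ≤ m.sup := by
    intro a ha
    have hapos := hlpos a ha
    have h1 := hsm a hapos
    have hmem : a ∈ l.filter (fun b => a ≤ b) :=
      Multiset.mem_filter.2 ⟨ha, le_refl a⟩
    have hle : a ≤ (l.filter fun b => a ≤ b).sum :=
      Multiset.single_le_sum (fun x _ => Nat.zero_le x) _ hmem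
    have hpos : 0 < (m.filter fun b => a ≤ b).sum := lt_of_lt_of_le (lt_of_lt_of_le hapos hle) h1
    have hne : (m.filter fun b => a ≤ b) ≠ 0 := by
      intro h; rw [h] at hpos; simp at hpos
    obtain ⟨b, hb⟩ := Multiset.exists_mem_of_ne_zero hne
    obtain ⟨hbm, hab⟩ := Multiset.mem_filter.1 hb
    exact le_trans hab (Multiset.le_sup hbm)
  refine ⟨?_, Multiset.sup_le.2 key⟩
  intro p hp
  set X := m.sup with hX
  have hp0 : (0:ℝ) < p := lt_of_lt_of_le one_pos hp
  have hp1 : (0:ℝ) ≤ p - 1 := by linarith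
  set w : ℕ → ℝ := fun x =>
    if x = 1 then 1 else ((x:ℝ) ^ (p-1) - ((x-1 : ℕ):ℝ) ^ (p-1)) with hw
  have hw_nonneg : ∀ x : ℕ, 0 ≤ w x := by
    intro x
    simp only [hw]
    split
    · norm_num
    · have : ((x-1 : ℕ):ℝ) ^ (p-1) ≤ (x:ℝ) ^ (p-1) := by
        apply Real.rpow_le_rpow (by positivity) _ hp1
        exact_mod_cast Nat.sub_le x 1
      linarith
  have hw_sum : ∀ a : ℕ, 1 ≤ a → ∑ x ∈ Finset.Icc 1 a, w x = (a:ℝ) ^ (p-1) := by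
    intro a ha
    induction a, ha using Nat.le_induction with
    | base => simp [hw]
    | succ n hn ih =>
      rw [Finset.sum_Icc_succ_top (by omega), ih]
      have hne : n + 1 ≠ 1 := by omega
      simp only [hw, if_neg hne]
      have : (n + 1 - 1 : ℕ) = n := by omega
      rw [this]
      push_cast
      ring
  have hsingle : ∀ a : ℕ, 1 ≤ a → a ≤ X →
      ∑ x ∈ Finset.Icc 1 X, w x * (if x ≤ a then (a:ℝ) else 0) = (a:ℝ) ^ p := by
    intro a ha haX
    have hsub : Finset.Icc 1 a ⊆ Finset.Icc 1 X := by
      apply Finset.Icc_subset_Icc_right haX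
    rw [← Finset.sum_subset hsub (by
      intro x hx hxa
      simp only [Finset.mem_Icc] at hx hxa
      have : ¬ x ≤ a := by omega
      rw [if_neg this, mul_zero])]
    have : ∀ x ∈ Finset.Icc 1 a, w x * (if x ≤ a then (a:ℝ) else 0) = w x * a := by
      intro x hx
      simp only [Finset.mem_Icc] at hx
      rw [if_pos hx.2]
    rw [Finset.sum_congr rfl this, ← Finset.sum_mul, hw_sum a ha]
    have hap : (0:ℝ) < a := by exact_mod_cast ha
    have hpe : p - 1 + 1 = p := by ring
    rw [← Real.rpow_add_one hap.ne', hpe]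
  have hmain : ∀ t : Multiset ℕ, (∀ a ∈ t, 1 ≤ a ∧ a ≤ X) →
      (t.map fun a : ℕ => (a:ℝ) ^ p).sum =
        ∑ x ∈ Finset.Icc 1 X, w x * (((t.filter fun a => x ≤ a).sum : ℕ) : ℝ) := by
    intro t
    induction t using Multiset.induction with
    | empty => simp
    | cons a s ih =>
      intro hbd
      have ha := hbd a (Multiset.mem_cons_self a s)
      have hs : ∀ b ∈ s, 1 ≤ b ∧ b ≤ X := fun b hb => hbd b (Multiset.mem_cons_of_mem hb)
      rw [Multiset.map_cons, Multiset.sum_cons, ih hs]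
      have hfil : ∀ x : ℕ,
          ((((a ::ₘ s).filter fun b => x ≤ b).sum : ℕ) : ℝ) =
            (if x ≤ a then (a:ℝ) else 0) + (((s.filter fun b => x ≤ b).sum : ℕ) : ℝ) := by
        intro x
        by_cases hxa : x ≤ a
        · rw [Multiset.filter_cons_of_pos _ hxa, Multiset.sum_cons, if_pos hxa]
          push_cast; ring
        · rw [Multiset.filter_cons_of_neg _ hxa, if_neg hxa]
          simp
      calc (a:ℝ) ^ p + ∑ x ∈ Finset.Icc 1 X, w x * (((s.filter fun b => x ≤ b).sum : ℕ) : ℝ)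
          = ∑ x ∈ Finset.Icc 1 X, w x * (if x ≤ a then (a:ℝ) else 0)
            + ∑ x ∈ Finset.Icc 1 X, w x * (((s.filter fun b => x ≤ b).sum : ℕ) : ℝ) := by
            rw [hsingle a ha.1 ha.2]
        _ = ∑ x ∈ Finset.Icc 1 X, w x * ((((a ::ₘ s).filter fun b => x ≤ b).sum : ℕ) : ℝ) := by
            rw [← Finset.sum_add_distrib]
            apply Finset.sum_congr rfl
            intro x _
            rw [hfil x]
            ring
  have hbl : ∀ a ∈ l, 1 ≤ a ∧ a ≤ X := fun a ha => ⟨hlpos a ha, key a ha⟩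
  have hbm : ∀ a ∈ m, 1 ≤ a ∧ a ≤ X := fun a ha => ⟨hmpos a ha, Multiset.le_sup ha⟩
  have hsum_le : (l.map fun a : ℕ => (a:ℝ) ^ p).sum ≤ (m.map fun a : ℕ => (a:ℝ) ^ p).sum := by
    rw [hmain l hbl, hmain m hbm]
    apply Finset.sum_le_sum
    intro x hx
    simp only [Finset.mem_Icc] at hx
    apply mul_le_mul_of_nonneg_left _ (hw_nonneg x)
    exact_mod_cast hsm x hx.1
  have hnn : (0:ℝ) ≤ (l.map fun a : ℕ => (a:ℝ) ^ p).sum := by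
    apply Multiset.sum_nonneg
    intro y hy
    obtain ⟨a, _, rfl⟩ := Multiset.mem_map.1 hy
    positivity
  have hconv : ∀ t : Multiset ℕ, pnorm t p = ((t.map fun a : ℕ => (a:ℝ) ^ p).sum) ^ (1/p) := by
    intro t
    unfold pnorm
    congr 1
    simp [Multiset.bind_singleton, Multiset.map_map]
  rw [hconv l, hconv m]
  exact Real.rpow_le_rpow hnn hsum_le (by positivity)
end

section
/- Let λ = [λ₁, λ₂, …, λ_s] be an integral partition such that λ_i divides λ_j whenever i ≥ j (every entry divides every larger-or-equal entry), and let μ = [μ₁, …, μ_t] be an integral partition. If λ embeds into μ and λ₁ ≤ μ_k for some index k, then there exists an embedding of λ into μ that sends index 1 to k; equivalently, the partition [λ₂, …, λ_s] embeds into the sequence obtained from μ by replacing μ_k with μ_k − λ₁ (deleting it if μ_k = λ₁). -/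
private lemma my_exists_max (A : Multiset ℕ) (h : A ≠ 0) : ∃ a ∈ A, ∀ x ∈ A, x ≤ a := by
  induction A using Multiset.induction with
  | empty => simp at h
  | cons a s ih =>
    rcases eq_or_ne s 0 with rfl | hs
    · exact ⟨a, by simp, by simp⟩
    · obtain ⟨c, hc, hmax⟩ := ih hs
      rcases le_total a c with h' | h'
      · refine ⟨c, Multiset.mem_cons_of_mem hc, ?_⟩
        intro x hx
        rcases Multiset.mem_cons.1 hx with rfl | hx
        · exact h'
        · exact hmax x hx
      · refine ⟨a, Multiset.mem_cons_self a s, ?_⟩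
        intro x hx
        rcases Multiset.mem_cons.1 hx with rfl | hx
        · exact le_rfl
        · exact (hmax x hx).trans h'

private lemma my_mem_sum_map {T : Multiset (Multiset ℕ × ℕ)} {a : ℕ}
    (h : a ∈ (T.map Prod.fst).sum) : ∃ q ∈ T, a ∈ q.1 := by
  induction T using Multiset.induction with
  | empty => simp at h
  | cons p s ih =>
    rw [Multiset.map_cons, Multiset.sum_cons] at h
    rcases Multiset.mem_add.1 h with h | h
    · exact ⟨p, Multiset.mem_cons_self p s, h⟩
    · obtain ⟨q, hq, hq2⟩ := ih h
      exact ⟨q, Multiset.mem_cons_of_mem hq, hq2⟩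

private lemma my_greedy : ∀ (n : ℕ) (A : Multiset ℕ) (L : ℕ), Multiset.card A ≤ n →
    (∀ x ∈ A, 0 < x) → (∀ x ∈ A, ∀ y ∈ A, x ≤ y → x ∣ y) → (∀ x ∈ A, x ∣ L) →
    ∃ B, B ≤ A ∧ B.sum ≤ L ∧ (B.sum = L ∨ B = A) := by
  intro n
  induction n with
  | zero =>
    intro A L hcard _ _ _
    have hA : A = 0 := Multiset.card_eq_zero.1 (Nat.le_zero.1 hcard)
    exact ⟨0, by simp [hA], by simp, Or.inr hA.symm⟩
  | succ n ih =>
    intro A L hcard hpos hch hdvd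
    rcases eq_or_ne A 0 with rfl | hA
    · exact ⟨0, le_rfl, by simp, Or.inr rfl⟩
    rcases Nat.eq_zero_or_pos L with rfl | hL
    · exact ⟨0, Multiset.zero_le A, by simp, Or.inl rfl⟩
    obtain ⟨a, ha, hmax⟩ := my_exists_max A hA
    have haL : a ≤ L := Nat.le_of_dvd hL (hdvd a ha)
    have hcard' : Multiset.card (A.erase a) ≤ n := by
      have h1 : Multiset.card (A.erase a) = Multiset.card A - 1 := by
        rw [Multiset.card_erase_of_mem ha, Nat.pred_eq_sub_one]
      have h2 : 0 < Multiset.card A := Multiset.card_pos.2 hA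
      omega
    obtain ⟨B', hB'le, hB'sum, hB'⟩ := ih (A.erase a) (L - a) hcard'
      (fun x hx => hpos x (Multiset.mem_of_mem_erase hx))
      (fun x hx y hy => hch x (Multiset.mem_of_mem_erase hx) y (Multiset.mem_of_mem_erase hy))
      (fun x hx => Nat.dvd_sub (hdvd x (Multiset.mem_of_mem_erase hx))
        (hch x (Multiset.mem_of_mem_erase hx) a ha (hmax x (Multiset.mem_of_mem_erase hx))))
    refine ⟨a ::ₘ B', ?_, ?_, ?_⟩
    · calc a ::ₘ B' ≤ a ::ₘ A.erase a := Multiset.cons_le_cons a hB'le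
        _ = A := Multiset.cons_erase ha
    · rw [Multiset.sum_cons]; omega
    · rcases hB' with h | h
      · left; rw [Multiset.sum_cons, h]; omega
      · right; rw [h, Multiset.cons_erase ha]

/-- One step of the first-fit algorithm for divisibility-chain partitions:
if `λ ↪ μ` and the largest entry `λ₁ = l.sup` of `λ` fits into a bin `b` of
`μ`, then `λ` minus its largest entry embeds into `μ` with the bin `b`
replaced by `b - λ₁` (the bin deleted if `b = λ₁`). -/
theorem stmt_9 (l m : Multiset ℕ) (hl : IsPartition l) (hm : IsPartition m)
    (hchain : ∀ x ∈ l, ∀ y ∈ l, x ≤ y → x ∣ y)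
    (b : ℕ) (hb : b ∈ m) (hfits : l.sup ≤ b)
    (hemb : Embeds l m) :
    Embeds (l.erase l.sup)
      (m.erase b + (if l.sup = b then 0 else {b - l.sup})) := by
  obtain ⟨T, hT1, hT2, hT3⟩ := hemb
  have hLmem : l.sup ∈ l := by
    obtain ⟨a, ha, hmax⟩ := my_exists_max l hl.1
    have : l.sup = a := le_antisymm (Multiset.sup_le.2 fun x hx => hmax x hx) (Multiset.le_sup ha)
    rw [this]; exact ha
  have hLmax : ∀ x ∈ l, x ≤ l.sup := fun x hx => Multiset.le_sup hx
  have hdvdL : ∀ x ∈ l, x ∣ l.sup := fun x hx => hchain x hx _ hLmem (hLmax x hx)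
  have hLpos : 0 < l.sup := hl.2 _ hLmem
  obtain ⟨q, hqT, hLq⟩ := my_mem_sum_map (a := l.sup) (by rw [hT1]; exact hLmem)
  obtain ⟨T₁, rfl⟩ := Multiset.exists_cons_of_mem hqT
  rw [Multiset.map_cons, Multiset.sum_cons] at hT1
  rw [Multiset.map_cons] at hT2
  have hq : q.1.sum ≤ q.2 := hT3 q (Multiset.mem_cons_self _ _)
  have hLq1 : l.sup ≤ q.1.sum := Multiset.single_le_sum (fun _ _ => Nat.zero_le _) _ hLq
  have hqe : l.sup + (q.1.erase l.sup).sum = q.1.sum := Multiset.sum_erase hLq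
  have hlerase : l.erase l.sup = q.1.erase l.sup + (T₁.map Prod.fst).sum := by
    rw [← Multiset.erase_add_left_pos _ hLq, hT1]
  by_cases hqb : q.2 = b
  · -- l.sup's group is already assigned to (a copy of) b
    have hqb2 : q.1.sum ≤ b := hqb ▸ hq
    have hmE : m.erase b = T₁.map Prod.snd := by
      rw [← hT2, ← hqb, Multiset.erase_cons_head]
    by_cases hLb : l.sup = b
    · have h0 : (q.1.erase l.sup).sum = 0 := by omega
      have hq1e : q.1.erase l.sup = 0 := by
        refine Multiset.eq_zero_of_forall_notMem fun x hx => ?_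
        have hx0 : x = 0 := Multiset.sum_eq_zero_iff.1 h0 x hx
        have hxpos : 0 < x := hl.2 x (by
          rw [← hT1]
          exact Multiset.mem_add.2 (Or.inl (Multiset.mem_of_mem_erase hx)))
        omega
      refine ⟨T₁, ?_, ?_, fun r hr => hT3 r (Multiset.mem_cons_of_mem hr)⟩
      · rw [hlerase, hq1e, zero_add]
      · rw [if_pos hLb, add_zero, hmE]
    · refine ⟨(q.1.erase l.sup, b - l.sup) ::ₘ T₁, ?_, ?_, ?_⟩
      · rw [Multiset.map_cons, Multiset.sum_cons, hlerase]
      · rw [Multiset.map_cons, if_neg hLb, hmE, add_comm, Multiset.singleton_add]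
      · intro r hr
        rcases Multiset.mem_cons.1 hr with rfl | hr
        · show (q.1.erase l.sup).sum ≤ b - l.sup
          omega
        · exact hT3 r (Multiset.mem_cons_of_mem hr)
  · -- l.sup's group is in a different bin; find a copy of b elsewhere
    have hbT₁ : b ∈ T₁.map Prod.snd := by
      have hbm : b ∈ q.2 ::ₘ T₁.map Prod.snd := hT2 ▸ hb
      rcases Multiset.mem_cons.1 hbm with h | h
      · exact absurd h.symm hqb
      · exact h
    obtain ⟨p, hpT₁, hpb⟩ := Multiset.mem_map.1 hbT₁
    obtain ⟨T₂, rfl⟩ := Multiset.exists_cons_of_mem hpT₁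
    rw [Multiset.map_cons, Multiset.sum_cons] at hT1 hlerase
    rw [Multiset.map_cons] at hT2
    have hp : p.1.sum ≤ b := by
      have := hT3 p (Multiset.mem_cons_of_mem (Multiset.mem_cons_self _ _))
      omega
    have hp1l : ∀ x ∈ p.1, x ∈ l := fun x hx => by
      rw [← hT1]
      exact Multiset.mem_add.2 (Or.inr (Multiset.mem_add.2 (Or.inl hx)))
    obtain ⟨B, hBA, hBsum, hBcase⟩ := my_greedy (Multiset.card p.1) p.1 l.sup le_rfl
      (fun x hx => hl.2 x (hp1l x hx))
      (fun x hx y hy => hchain x (hp1l x hx) y (hp1l y hy))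
      (fun x hx => hdvdL x (hp1l x hx))
    have hsub : (p.1 - B) + B = p.1 := tsub_add_cancel_of_le hBA
    have hsubsum : (p.1 - B).sum + B.sum = p.1.sum := by
      rw [← Multiset.sum_add, hsub]
    have hABle : (p.1 - B).sum ≤ b - l.sup := by
      rcases hBcase with h | h
      · omega
      · rw [h] at hsubsum ⊢; omega
    have hnew : (q.1.erase l.sup + B).sum ≤ q.2 := by
      rw [Multiset.sum_add]; omega
    have hmE : m.erase b = q.2 ::ₘ T₂.map Prod.snd := by
      rw [← hT2, hpb, Multiset.erase_cons_tail _ hqb, Multiset.erase_cons_head]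
    by_cases hLb : l.sup = b
    · have hAB0 : p.1 - B = 0 := by
        refine Multiset.eq_zero_of_forall_notMem fun x hx => ?_
        have hx0 : x = 0 := Multiset.sum_eq_zero_iff.1 (by omega) x hx
        have hxpos : 0 < x := hl.2 x (hp1l x (Multiset.mem_of_le tsub_le_self hx))
        omega
      have hBp : B = p.1 := by rw [hAB0, zero_add] at hsub; exact hsub
      refine ⟨(q.1.erase l.sup + B, q.2) ::ₘ T₂, ?_, ?_, ?_⟩
      · rw [Multiset.map_cons, Multiset.sum_cons]
        dsimp only
        rw [hlerase, hBp]
        ac_rfl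
      · rw [Multiset.map_cons, if_pos hLb, add_zero, hmE]
      · intro r hr
        rcases Multiset.mem_cons.1 hr with rfl | hr
        · exact hnew
        · exact hT3 r (Multiset.mem_cons_of_mem (Multiset.mem_cons_of_mem hr))
    · refine ⟨(q.1.erase l.sup + B, q.2) ::ₘ (p.1 - B, b - l.sup) ::ₘ T₂, ?_, ?_, ?_⟩
      · rw [Multiset.map_cons, Multiset.sum_cons, Multiset.map_cons, Multiset.sum_cons]
        dsimp only
        rw [hlerase]
        conv_rhs => rw [← hsub]
        ac_rfl
      · rw [Multiset.map_cons, Multiset.map_cons, if_neg hLb, hmE]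
        dsimp only
        rw [add_comm, Multiset.singleton_add, Multiset.cons_swap]
      · intro r hr
        rcases Multiset.mem_cons.1 hr with rfl | hr
        · exact hnew
        · rcases Multiset.mem_cons.1 hr with rfl | hr
          · exact hABle
          · exact hT3 r (Multiset.mem_cons_of_mem (Multiset.mem_cons_of_mem hr))
end

section
/- Let λ₁ ≥ λ₂ ≥ … ≥ λ_l be positive integers such that λ_j divides λ_i whenever j ≥ i. If λ₂ + λ₃ + ⋯ + λ_l > λ₁, then there exists an index m with 2 ≤ m ≤ l such that λ₂ + λ₃ + ⋯ + λ_m = λ₁ exactly. -/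
/-! Greedy subtraction: if `a ≠ 0` then the first entry `x` divides `a`, so `x ≤ a`, and
`a - x` heads a divisibility chain with the remaining entries, whose sum still exceeds it. -/

theorem List.exists_sum_take_eq_of_pairwise_dvd {a : ℕ} {T : List ℕ}
    (hchain : (a :: T).Pairwise fun x y => y ∣ x) (hlt : a < T.sum) :
    ∃ k < T.length, (T.take k).sum = a := by
  induction T generalizing a with
  | nil => simp at hlt
  | cons x T ih =>
    rcases Nat.eq_zero_or_pos a with rfl | ha
    · exact ⟨0, by simp, by simp⟩
    simp only [List.pairwise_cons, List.mem_cons, forall_eq_or_imp] at hchain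
    obtain ⟨⟨hxa, hTa⟩, hTx, hT⟩ := hchain
    have hxle : x ≤ a := Nat.le_of_dvd ha hxa
    have hchain' : ((a - x) :: T).Pairwise fun x y => y ∣ x :=
      List.pairwise_cons.2 ⟨fun y hy => Nat.dvd_sub (hTa y hy) (hTx y hy), hT⟩
    obtain ⟨k, hk, hsum⟩ := ih hchain' (by simp at hlt; omega)
    exact ⟨k + 1, by simpa using hk, by simp [hsum]; omega⟩

theorem stmt_10_general (L : List ℕ) (hpos : ∀ x ∈ L, 0 < x)
    (hdvd : ∀ i j : Fin L.length, i ≤ j → L.get j ∣ L.get i)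
    (hne : 0 < L.length)
    (hgt : L.get ⟨0, hne⟩ < (L.drop 1).sum) :
    ∃ m : ℕ, 2 ≤ m ∧ m ≤ L.length ∧
      ((L.drop 1).take (m - 1)).sum = L.get ⟨0, hne⟩ := by
  have hchain : L.Pairwise fun x y => y ∣ x :=
    List.pairwise_iff_get.2 fun i j hij => hdvd i j hij.le
  obtain _ | ⟨a, T⟩ := L
  · simp at hne
  simp only [List.get_eq_getElem, List.getElem_cons_zero, List.drop_succ_cons,
    List.drop_zero, List.length_cons] at hgt ⊢
  obtain ⟨k, hk, hsum⟩ := List.exists_sum_take_eq_of_pairwise_dvd hchain hgt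
  have hk0 : k ≠ 0 := by
    rintro rfl
    simpa [← hsum] using hpos a List.mem_cons_self
  exact ⟨k + 1, by omega, by omega, by simpa using hsum⟩

/-- Key arithmetic lemma: for positive integers `λ₁ ≥ λ₂ ≥ ⋯ ≥ λ_l` forming a
divisibility chain (`λ_j ∣ λ_i` whenever `i ≤ j`), if `λ₂ + ⋯ + λ_l > λ₁`
then some prefix `λ₂ + ⋯ + λ_m` (with `2 ≤ m ≤ l`) equals `λ₁` exactly. -/
theorem stmt_10 (L : List ℕ) (hpos : ∀ x ∈ L, 0 < x)
    (hsort : L.Pairwise (· ≥ ·))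
    (hdvd : ∀ i j : Fin L.length, i ≤ j → L.get j ∣ L.get i)
    (hne : 0 < L.length)
    (hgt : L.get ⟨0, hne⟩ < (L.drop 1).sum) :
    ∃ m : ℕ, 2 ≤ m ∧ m ≤ L.length ∧
      ((L.drop 1).take (m - 1)).sum = L.get ⟨0, hne⟩ :=
  stmt_10_general L hpos hdvd hne hgt
end

section
/- Fix an integer p ≥ 2, and let λ and μ be integral partitions all of whose entries are powers of p. Then λ embeds into μ if and only if λ is supermajorized by μ. -/
/- ### Auxiliary lemmas -/

lemma multiset_exists_max (l : Multiset ℕ) (h : l ≠ 0) : ∃ a ∈ l, ∀ x ∈ l, x ≤ a := by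
  induction l using Multiset.induction_on with
  | empty => exact absurd rfl h
  | cons a t ih =>
    rcases eq_or_ne t 0 with rfl | ht
    · exact ⟨a, by simp⟩
    · obtain ⟨b, hb, hbmax⟩ := ih ht
      refine ⟨max a b, ?_, ?_⟩
      · rcases le_total a b with h' | h'
        · simp [max_eq_right h', Multiset.mem_cons, hb]
        · simp [max_eq_left h']
      · intro x hx
        rcases Multiset.mem_cons.mp hx with rfl | hx
        · exact le_max_left _ _
        · exact le_trans (hbmax x hx) (le_max_right _ _)

lemma embeds_zero (m : Multiset ℕ) : Embeds 0 m := by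
  refine ⟨m.map fun x => (0, x), ?_, ?_, ?_⟩
  · simp
  · simp
  · intro q hq; simp at hq; obtain ⟨x, _, rfl⟩ := hq; simp

lemma embeds_merge2 (l s : Multiset ℕ) (a b : ℕ) (h : Embeds l (a ::ₘ b ::ₘ s)) :
    Embeds l ((a + b) ::ₘ s) := by
  obtain ⟨T, hf, hs, hq⟩ := h
  have ha : a ∈ T.map Prod.snd := by rw [hs]; simp
  obtain ⟨q, hqT, hqa⟩ := Multiset.mem_map.mp ha
  obtain ⟨T1, rfl⟩ : ∃ T1, T = q ::ₘ T1 := ⟨T.erase q, (Multiset.cons_erase hqT).symm⟩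
  rw [Multiset.map_cons, hqa] at hs
  have hs1 : T1.map Prod.snd = b ::ₘ s := (Multiset.cons_inj_right (a := a)).mp hs
  have hb : b ∈ T1.map Prod.snd := by rw [hs1]; simp
  obtain ⟨r, hrT, hrb⟩ := Multiset.mem_map.mp hb
  obtain ⟨T2, rfl⟩ : ∃ T2, T1 = r ::ₘ T2 := ⟨T1.erase r, (Multiset.cons_erase hrT).symm⟩
  rw [Multiset.map_cons, hrb] at hs1
  have hs2 : T2.map Prod.snd = s := (Multiset.cons_inj_right (a := b)).mp hs1
  refine ⟨(q.1 + r.1, a + b) ::ₘ T2, ?_, ?_, ?_⟩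
  · simp only [Multiset.map_cons, Multiset.sum_cons] at hf ⊢
    rw [← hf, add_assoc]
  · simp [Multiset.map_cons, hs2]
  · intro x hx
    rcases Multiset.mem_cons.mp hx with rfl | hx
    · simp only [Multiset.sum_add]
      exact add_le_add (hqa ▸ hq q (Multiset.mem_cons_self _ _)) (hrb ▸ hq r (by simp))
    · exact hq x (by simp [hx])

lemma embeds_merge_rep (l : Multiset ℕ) :
    ∀ k c (s : Multiset ℕ), 0 < k → Embeds l (Multiset.replicate k c + s) →
      Embeds l ((k * c) ::ₘ s) := by
  intro k
  induction k with
  | zero => omega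
  | succ k ih =>
    intro c s _ h
    rcases Nat.eq_zero_or_pos k with rfl | hk
    · simpa using h
    · have h' : Embeds l (Multiset.replicate k c + (c ::ₘ s)) := by
        have : Multiset.replicate (k + 1) c + s = Multiset.replicate k c + (c ::ₘ s) := by
          rw [Multiset.replicate_succ]
          simp [Multiset.cons_add, Multiset.add_cons]
        rwa [this] at h
      have h2 := ih c (c ::ₘ s) hk h'
      have h3 := embeds_merge2 l s (k * c) c h2
      have : k * c + c = (k + 1) * c := by ring
      rwa [this] at h3

lemma embeds_superm (l m : Multiset ℕ) (h : Embeds l m) : Supermajorized l m := by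
  obtain ⟨T, hf, hs, hq⟩ := h
  intro x hx
  subst hf hs
  induction T using Multiset.induction_on with
  | empty => simp
  | cons q T ih =>
    simp only [Multiset.map_cons, Multiset.sum_cons, Multiset.filter_add,
      Multiset.filter_cons, Multiset.sum_add]
    have h1 : q.1.sum ≤ q.2 := hq q (Multiset.mem_cons_self _ _)
    have h2 := ih (fun r hr => hq r (by simp [hr]))
    refine add_le_add ?_ h2
    by_cases hxq : x ≤ q.2
    · simp only [hxq, if_pos]
      have hle : (Multiset.filter (fun a => x ≤ a) q.1).sum ≤ q.1.sum := by
        obtain ⟨u, hu⟩ := Multiset.le_iff_exists_add.mp (Multiset.filter_le (fun a => x ≤ a) q.1)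
        conv_rhs => rw [hu]
        rw [Multiset.sum_add]; exact Nat.le_add_right _ _
      simp only [Multiset.sum_singleton]
      omega
    · have : Multiset.filter (fun a => x ≤ a) q.1 = 0 := by
        rw [Multiset.filter_eq_nil]
        intro a ha
        have : a ≤ q.1.sum := by
          obtain ⟨u, hu⟩ := Multiset.le_iff_exists_add.mp (Multiset.singleton_le.mpr ha)
          conv_rhs => rw [hu]
          rw [Multiset.sum_add, Multiset.sum_singleton]; exact Nat.le_add_right _ _
        omega
      simp [this, hxq]

lemma superm_embeds (p : ℕ) (hp : 2 ≤ p) : ∀ n (l m : Multiset ℕ),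
    (m.map fun x => x * x).sum ≤ n →
    (∀ x ∈ l, ∃ i : ℕ, x = p ^ i) → (∀ x ∈ m, ∃ i : ℕ, x = p ^ i) →
    Supermajorized l m → Embeds l m := by
  intro n
  induction n using Nat.strong_induction_on with
  | _ n ih =>
  intro l m hn hlp hmp hsm
  rcases eq_or_ne l 0 with rfl | hl0
  · exact embeds_zero m
  obtain ⟨a, haL, hamax⟩ := multiset_exists_max l hl0
  obtain ⟨i, hai⟩ := hlp a haL
  have hpa : 0 < a := by rw [hai]; positivity
  rcases eq_or_ne m 0 with rfl | hm0
  · exfalso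
    have := hsm a hpa
    have hmem : a ∈ l.filter fun x => a ≤ x := Multiset.mem_filter.mpr ⟨haL, le_refl a⟩
    have hle : a ≤ (l.filter fun x => a ≤ x).sum := by
      obtain ⟨u, hu⟩ := Multiset.le_iff_exists_add.mp (Multiset.singleton_le.mpr hmem)
      rw [hu, Multiset.sum_add, Multiset.sum_singleton]; exact Nat.le_add_right _ _
    simp at this
    omega
  obtain ⟨b, hbM, hbmax⟩ := multiset_exists_max m hm0
  obtain ⟨j, hbj⟩ := hmp b hbM
  have hpb : 0 < b := by rw [hbj]; positivity
  -- a ≤ b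
  have hab : a ≤ b := by
    by_contra hcon
    push_neg at hcon
    have := hsm a hpa
    have hRHS : (m.filter fun x => a ≤ x) = 0 := by
      rw [Multiset.filter_eq_nil]
      intro x hx
      have := hbmax x hx
      omega
    have hmem : a ∈ l.filter fun x => a ≤ x := Multiset.mem_filter.mpr ⟨haL, le_refl a⟩
    have hle : a ≤ (l.filter fun x => a ≤ x).sum := by
      obtain ⟨u, hu⟩ := Multiset.le_iff_exists_add.mp (Multiset.singleton_le.mpr hmem)
      rw [hu, Multiset.sum_add, Multiset.sum_singleton]; exact Nat.le_add_right _ _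
    rw [hRHS] at this
    simp at this
    omega
  rcases eq_or_lt_of_le hab with rfl | hlt
  · -- Case A : max of l equals max of m; pair them off.
    have hl : l = a ::ₘ l.erase a := (Multiset.cons_erase haL).symm
    have hm : m = a ::ₘ m.erase a := (Multiset.cons_erase hbM).symm
    have hsm' : Supermajorized (l.erase a) (m.erase a) := by
      intro x hx
      by_cases hxa : x ≤ a
      · have := hsm x hx
        rw [hl, hm] at this
        simp only [Multiset.filter_cons, hxa, if_pos, Multiset.sum_add,
          Multiset.sum_singleton] at this
        omega
      · have : ((l.erase a).filter fun y => x ≤ y) = 0 := by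
          rw [Multiset.filter_eq_nil]
          intro y hy
          have := hamax y (Multiset.mem_of_mem_erase hy)
          omega
        simp [this]
    have hmeas : ((m.erase a).map fun x => x * x).sum < n := by
      have : (m.map fun x => x * x).sum = a * a + ((m.erase a).map fun x => x * x).sum := by
        conv_lhs => rw [hm]
        simp
      nlinarith
    obtain ⟨T, hf, hs, hq⟩ := ih _ hmeas (l.erase a) (m.erase a) (le_refl _)
      (fun x hx => hlp x (Multiset.mem_of_mem_erase hx))
      (fun x hx => hmp x (Multiset.mem_of_mem_erase hx)) hsm'
    refine ⟨({a}, a) ::ₘ T, ?_, ?_, ?_⟩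
    · simp only [Multiset.map_cons, Multiset.sum_cons, hf]
      rw [hl]; simp [Multiset.singleton_add]
    · simp only [Multiset.map_cons, hs]; exact hm.symm
    · intro q hq'
      rcases Multiset.mem_cons.mp hq' with rfl | hq'
      · simp
      · exact hq q hq'
  · -- Case B : split the largest bin b = p^j into p bins of size p^(j-1).
    have hj : 1 ≤ j := by
      by_contra hcon
      push_neg at hcon
      interval_cases j
      simp at hbj
      omega
    set c := p ^ (j - 1) with hc
    have hbc : b = p * c := by
      rw [hbj, hc, ← pow_succ']
      congr 1
      omega
    have hac : a ≤ c := by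
      rw [hai, hc]
      apply pow_le_pow_right₀ (by omega)
      by_contra hcon
      push_neg at hcon
      have : j ≤ i := by omega
      have : p ^ j ≤ p ^ i := pow_le_pow_right₀ (by omega) this
      omega
    set m₀ := m.erase b with hm₀
    have hm : m = b ::ₘ m₀ := (Multiset.cons_erase hbM).symm
    set m' := Multiset.replicate p c + m₀ with hm'
    have hsm' : Supermajorized l m' := by
      intro x hx
      by_cases hxc : x ≤ c
      · have hrep : ((Multiset.replicate p c).filter fun y => x ≤ y) = Multiset.replicate p c :=
          Multiset.filter_eq_self.mpr (fun y hy => by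
            rw [Multiset.eq_of_mem_replicate hy]; exact hxc)
        have hsum : (m'.filter fun y => x ≤ y).sum = b + (m₀.filter fun y => x ≤ y).sum := by
          rw [hm', Multiset.filter_add, hrep, Multiset.sum_add, Multiset.sum_replicate,
            smul_eq_mul, ← hbc]
        have hxb : x ≤ b := le_trans hxc (by rw [hbc]; exact Nat.le_mul_of_pos_left c (by omega))
        have hfm : ((b ::ₘ m₀).filter fun y => x ≤ y).sum = b + (m₀.filter fun y => x ≤ y).sum := by
          rw [Multiset.filter_cons_of_pos _ hxb, Multiset.sum_cons]
        have := hsm x hx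
        rw [hm, hfm] at this
        omega
      · have : (l.filter fun y => x ≤ y) = 0 := by
          rw [Multiset.filter_eq_nil]
          intro y hy
          have := hamax y hy
          omega
        simp [this]
    have hmeas : (m'.map fun x => x * x).sum < n := by
      have h1 : (m.map fun x => x * x).sum = b * b + (m₀.map fun x => x * x).sum := by
        conv_lhs => rw [hm]
        simp
      have h2 : (m'.map fun x => x * x).sum = p * (c * c) + (m₀.map fun x => x * x).sum := by
        rw [hm', Multiset.map_add, Multiset.sum_add, Multiset.map_replicate,
          Multiset.sum_replicate, smul_eq_mul]
      have hcpos : 0 < c := by rw [hc]; positivity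
      have : p * (c * c) < b * b := by
        rw [hbc]
        nlinarith
      omega
    have hm'p : ∀ x ∈ m', ∃ i : ℕ, x = p ^ i := by
      intro x hx
      rw [hm'] at hx
      rcases Multiset.mem_add.mp hx with hx | hx
      · exact ⟨j - 1, Multiset.eq_of_mem_replicate hx⟩
      · exact hmp x (Multiset.mem_of_mem_erase hx)
    have hemb : Embeds l m' := ih _ hmeas l m' (le_refl _) hlp hm'p hsm'
    have := embeds_merge_rep l p c m₀ (by omega) hemb
    rw [← hbc] at this
    rwa [← hm] at this

/-- For partitions whose entries are all powers of a fixed `p ≥ 2`,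
embeddability coincides with supermajorization. -/
theorem stmt_11 (p : ℕ) (hp : 2 ≤ p) (l m : Multiset ℕ)
    (hl : IsPartition l) (hm : IsPartition m)
    (hlp : ∀ x ∈ l, ∃ i : ℕ, x = p ^ i) (hmp : ∀ x ∈ m, ∃ i : ℕ, x = p ^ i) :
    Embeds l m ↔ Supermajorized l m := by
  constructor
  · exact embeds_superm l m
  · exact superm_embeds p hp ((m.map fun x => x * x).sum) l m (le_refl _) hlp hmp
end

section
/- Fix an integer p ≥ 2. Let λ and μ be partitions all of whose entries are powers of p, written by multiplicities as λ = [a₀, a₁, …]_p and μ = [b₀, b₁, …]_p, where a_i (resp. b_i) is the number of entries equal to p^i. Fix an index i with a_i ≤ b_i, and let λ̃ be the partition obtained from λ by deleting all a_i entries equal to p^i, and let μ̃ be the partition obtained from μ by deleting a_i of its entries equal to p^i (leaving b_i − a_i of them). Then λ stably embeds into μ if and only if λ̃ stably embeds into μ̃. -/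
/-! For multisets of powers of `p`, `λ s↪ μ` holds iff `λ × ν` is supermajorized by `μ × ν` for
some partition `ν`. Embedding implies supermajorization for arbitrary multisets. Conversely,
between multisets of powers of `p`, supermajorization implies embedding by greedy packing: the
largest entry `p ^ u` goes into a bin `p ^ s ≥ p ^ u`, and the free space `p ^ s - p ^ u` is
returned as `p - 1` bins of each size `p ^ u, …, p ^ (s - 1)`, all at least as large as the
remaining entries. An arbitrary catalyst `ν` can be rounded to one made of powers of `p`, which
scales every tail sum by the same power of `p`. Tail sums are additive, so supermajorization
cancels the common summand of `a_i` copies of `p ^ i` in `λ` and `μ`. -/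

open Multiset

namespace Embeds

theorem cons {A X Y : Multiset ℕ} {b : ℕ} (hA : A.sum ≤ b) (h : Embeds X Y) :
    Embeds (A + X) (b ::ₘ Y) := by
  obtain ⟨T, rfl, rfl, hT⟩ := h
  refine ⟨(A, b) ::ₘ T, by simp, by simp, ?_⟩
  rintro q hq
  rcases mem_cons.mp hq with rfl | hq
  exacts [hA, hT q hq]

theorem zero_left (Y : Multiset ℕ) : Embeds 0 Y := by
  induction Y using Multiset.induction with
  | empty => exact ⟨0, by simp, by simp, by simp⟩
  | cons b Y ih => simpa using ih.cons (A := 0) (b := b) (by simp)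

theorem induction_on {P : Multiset ℕ → Multiset ℕ → Prop} {X Y : Multiset ℕ} (h : Embeds X Y)
    (zero : P 0 0) (cons : ∀ {A X Y b}, A.sum ≤ b → P X Y → P (A + X) (b ::ₘ Y)) : P X Y := by
  obtain ⟨T, rfl, rfl, hT⟩ := h
  induction T using Multiset.induction with
  | empty => simpa using zero
  | cons q T ih =>
    simpa using cons (hT q (mem_cons_self q T)) (ih fun r hr => hT r (mem_cons_of_mem hr))

theorem sum_le {X Y : Multiset ℕ} (h : Embeds X Y) : X.sum ≤ Y.sum :=
  h.induction_on (P := fun X Y => X.sum ≤ Y.sum) le_rfl fun hA h => by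
    simpa using add_le_add hA h

theorem exists_of_cons_right {X W : Multiset ℕ} {b : ℕ} (h : Embeds X (b ::ₘ W)) :
    ∃ A X', X = A + X' ∧ A.sum ≤ b ∧ Embeds X' W := by
  classical
  obtain ⟨T, rfl, hsnd, hT⟩ := h
  obtain ⟨q, hq, rfl, hW⟩ := (map_eq_cons _ _ _ _).mpr hsnd
  refine ⟨q.1, ((T.erase q).map Prod.fst).sum, ?_, hT q hq,
    ⟨T.erase q, rfl, hW, fun r hr => hT r (mem_of_mem_erase hr)⟩⟩
  conv_lhs => rw [← cons_erase hq]
  simp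

theorem exists_split_of_add_right {X Y Z : Multiset ℕ} (h : Embeds X (Y + Z)) :
    ∃ X₁ X₂, X = X₁ + X₂ ∧ Embeds X₁ Y ∧ Embeds X₂ Z := by
  induction Y using Multiset.induction generalizing X with
  | empty => exact ⟨0, X, by simp, zero_left 0, by simpa using h⟩
  | cons b Y ih =>
    obtain ⟨A, X', rfl, hA, h'⟩ := exists_of_cons_right (by simpa using h)
    obtain ⟨X₁, X₂, rfl, h₁, h₂⟩ := ih h'
    exact ⟨A + X₁, X₂, (add_assoc _ _ _).symm, h₁.cons hA, h₂⟩

theorem cons_of_add_right {X Y D : Multiset ℕ} {a b : ℕ} (h : Embeds X (Y + D))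
    (hab : a + D.sum ≤ b) : Embeds (a ::ₘ X) (b ::ₘ Y) := by
  obtain ⟨X₁, X₂, rfl, h₁, h₂⟩ := h.exists_split_of_add_right
  have hsum : (a ::ₘ X₂).sum ≤ b := by
    simpa using (Nat.add_le_add_left h₂.sum_le a).trans hab
  simpa [add_comm X₁, ← cons_add] using h₁.cons hsum

end Embeds

def tailSum (x : ℕ) (l : Multiset ℕ) : ℕ := (l.filter (x ≤ ·)).sum

theorem supermajorized_iff_tailSum {l m : Multiset ℕ} :
    Supermajorized l m ↔ ∀ x, 0 < x → tailSum x l ≤ tailSum x m := Iff.rfl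

section tailSum

variable (x : ℕ)

@[simp] theorem tailSum_add (l m : Multiset ℕ) :
    tailSum x (l + m) = tailSum x l + tailSum x m := by
  simp [tailSum, filter_add]

theorem tailSum_le_sum (l : Multiset ℕ) : tailSum x l ≤ l.sum := by
  conv_rhs => rw [← filter_add_not (x ≤ ·) l, sum_add]
  exact Nat.le_add_right _ _

theorem tailSum_eq_sum {l : Multiset ℕ} (h : ∀ a ∈ l, x ≤ a) : tailSum x l = l.sum := by
  rw [tailSum, filter_eq_self.mpr h]

theorem tailSum_eq_zero {l : Multiset ℕ} (h : ∀ a ∈ l, a < x) : tailSum x l = 0 := by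
  rw [tailSum, filter_eq_nil.mpr fun a ha => not_le.mpr (h a ha), sum_zero]

theorem le_tailSum_of_mem {l : Multiset ℕ} {a : ℕ} (ha : a ∈ l) (hxa : x ≤ a) : a ≤ tailSum x l :=
  le_sum_of_mem (mem_filter.mpr ⟨ha, hxa⟩)

theorem tailSum_replicate (n a : ℕ) :
    tailSum x (replicate n a) = if x ≤ a then n * a else 0 := by
  split_ifs with h
  · simp [tailSum_eq_sum x fun b hb => (eq_of_mem_replicate hb).symm ▸ h]
  · simp [tailSum_eq_zero x fun b hb => (eq_of_mem_replicate hb).symm ▸ not_le.mp h]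

@[simp] theorem tailSum_singleton (a : ℕ) : tailSum x {a} = if x ≤ a then a else 0 := by
  simpa using tailSum_replicate x 1 a

@[simp] theorem tailSum_cons (a : ℕ) (l : Multiset ℕ) :
    tailSum x (a ::ₘ l) = (if x ≤ a then a else 0) + tailSum x l := by
  rw [← singleton_add, tailSum_add, tailSum_singleton]

theorem tailSum_bind {α : Type*} (s : Multiset α) (f : α → Multiset ℕ) :
    tailSum x (s.bind f) = (s.map fun a => tailSum x (f a)).sum := by
  simp [tailSum, filter_bind, sum_bind]

end tailSum

namespace Supermajorized

theorem add {X Y X' Y' : Multiset ℕ} (h : Supermajorized X Y) (h' : Supermajorized X' Y') :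
    Supermajorized (X + X') (Y + Y') := fun x hx => by
  simpa using add_le_add (h x hx) (h' x hx)

theorem of_sum_le_singleton {A : Multiset ℕ} {b : ℕ} (h : A.sum ≤ b) :
    Supermajorized A {b} := by
  rw [supermajorized_iff_tailSum]
  intro x _
  rw [tailSum_singleton]
  split_ifs with hxb
  · exact (tailSum_le_sum x A).trans h
  · exact (tailSum_eq_zero x fun a ha =>
      ((le_sum_of_mem ha).trans h).trans_lt (not_le.mp hxb)).le

theorem exists_ge {X Y : Multiset ℕ} (h : Supermajorized X Y) {a : ℕ} (ha : a ∈ X) (ha₀ : 0 < a) :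
    ∃ b ∈ Y, a ≤ b := by
  by_contra! hY
  have hXY := supermajorized_iff_tailSum.mp h a ha₀
  rw [tailSum_eq_zero a hY] at hXY
  have := le_tailSum_of_mem a ha le_rfl
  omega

theorem erase_max_add {X Y D : Multiset ℕ} {a b : ℕ} (h : Supermajorized X Y) (ha : a ∈ X)
    (hmax : ∀ x ∈ X, x ≤ a) (hb : b ∈ Y) (hD : ∀ d ∈ D, a ≤ d) (hab : a + D.sum = b) :
    Supermajorized (X.erase a) (Y.erase b + D) := by
  rw [supermajorized_iff_tailSum] at h ⊢
  intro x hx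
  rcases le_or_gt x a with hxa | hax
  · have hX := tailSum_cons x a (X.erase a)
    have hY := tailSum_cons x b (Y.erase b)
    rw [cons_erase ha, if_pos hxa] at hX
    rw [cons_erase hb, if_pos (hxa.trans (hab ▸ Nat.le_add_right a _))] at hY
    have := h x hx
    rw [tailSum_add, tailSum_eq_sum x fun d hd => hxa.trans (hD d hd)]
    omega
  · rw [tailSum_eq_zero x fun y hy => (hmax y (mem_of_mem_erase hy)).trans_lt hax]
    exact Nat.zero_le _

end Supermajorized

theorem Embeds.supermajorized {X Y : Multiset ℕ} (h : Embeds X Y) : Supermajorized X Y :=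
  h.induction_on (fun _ _ => le_rfl) fun hA h => by
    rw [← singleton_add]
    exact (Supermajorized.of_sum_le_singleton hA).add h

theorem supermajorized_add_right_iff {X Y Z : Multiset ℕ} :
    Supermajorized (X + Z) (Y + Z) ↔ Supermajorized X Y := by
  simp only [supermajorized_iff_tailSum, tailSum_add, Nat.add_le_add_iff_right]

def PowEntries (p : ℕ) (X : Multiset ℕ) : Prop := ∀ x ∈ X, ∃ i : ℕ, x = p ^ i

namespace PowEntries

variable {p : ℕ} {X Y : Multiset ℕ}

theorem mono (hY : PowEntries p Y) (hXY : X ≤ Y) : PowEntries p X :=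
  fun x hx => hY x (mem_of_le hXY hx)

theorem add (hX : PowEntries p X) (hY : PowEntries p Y) : PowEntries p (X + Y) := by
  intro x hx
  rcases mem_add.mp hx with hx | hx
  exacts [hX x hx, hY x hx]

theorem replicate (n i : ℕ) : PowEntries p (Multiset.replicate n (p ^ i)) :=
  fun _ hx => ⟨i, eq_of_mem_replicate hx⟩

theorem mprod (hX : PowEntries p X) (hY : PowEntries p Y) : PowEntries p (_root_.mprod X Y) := by
  intro z hz
  obtain ⟨x, hx, hz⟩ := mem_bind.mp hz
  obtain ⟨y, hy, rfl⟩ := mem_map.mp hz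
  obtain ⟨i, rfl⟩ := hX x hx
  obtain ⟨j, rfl⟩ := hY y hy
  exact ⟨i + j, (pow_add p i j).symm⟩

end PowEntries

theorem exists_powEntries_add_sum_eq {p : ℕ} (hp : 0 < p) (u n : ℕ) :
    ∃ D, PowEntries p D ∧ (∀ d ∈ D, p ^ u ≤ d) ∧ p ^ u + D.sum = p ^ (u + n) := by
  induction n with
  | zero => exact ⟨0, fun _ h => absurd h (notMem_zero _), by simp, by simp⟩
  | succ n ih =>
    obtain ⟨D, hDp, hD, hsum⟩ := ih
    refine ⟨D + replicate (p - 1) (p ^ (u + n)), hDp.add (.replicate _ _), ?_, ?_⟩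
    · intro d hd
      rcases mem_add.mp hd with hd | hd
      · exact hD d hd
      · rw [eq_of_mem_replicate hd]
        exact Nat.pow_le_pow_right hp (Nat.le_add_right u n)
    · rw [sum_add, ← add_assoc, hsum, sum_replicate, smul_eq_mul, ← add_assoc, pow_succ]
      obtain ⟨q, rfl⟩ := Nat.exists_eq_add_of_lt hp
      simp only [zero_add, add_tsub_cancel_right]
      ring

theorem embeds_of_supermajorized {p : ℕ} (hp : 1 < p) {X Y : Multiset ℕ} (hX : PowEntries p X)
    (hY : PowEntries p Y) (h : Supermajorized X Y) : Embeds X Y := by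
  induction hn : X.card generalizing X Y with
  | zero => rw [card_eq_zero.mp hn]; exact Embeds.zero_left Y
  | succ n ih =>
    obtain ⟨a, ha, hmax⟩ := exists_max_image id (s := X) (card_pos.mp (by omega))
    obtain ⟨u, rfl⟩ := hX a ha
    obtain ⟨b, hb, hab⟩ := h.exists_ge ha (by positivity)
    obtain ⟨s, rfl⟩ := hY b hb
    obtain ⟨D, hDp, hD, hsum⟩ := exists_powEntries_add_sum_eq (zero_lt_one.trans hp) u (s - u)
    rw [Nat.add_sub_cancel' ((Nat.pow_le_pow_iff_right hp).mp hab)] at hsum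
    have hrest : Embeds (X.erase (p ^ u)) (Y.erase (p ^ s) + D) :=
      ih (hX.mono (erase_le _ _)) ((hY.mono (erase_le _ _)).add hDp)
        (h.erase_max_add ha hmax hb hD hsum) (by rw [card_erase_of_mem ha, hn]; rfl)
    rw [← cons_erase ha, ← cons_erase hb]
    exact hrest.cons_of_add_right hsum.le

theorem Nat.log_pow_mul {p : ℕ} (hp : 1 < p) (u : ℕ) {v : ℕ} (hv : v ≠ 0) :
    Nat.log p (p ^ u * v) = u + Nat.log p v := by
  refine Nat.log_eq_of_pow_le_of_lt_pow ?_ ?_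
  · rw [pow_add]
    exact Nat.mul_le_mul_left _ (Nat.pow_log_le_self p hv)
  · rw [add_assoc, pow_add]
    exact Nat.mul_lt_mul_of_pos_left (Nat.lt_pow_succ_log_self hp v) (by positivity)

theorem le_pow_add_log_iff {p : ℕ} (hp : 1 < p) (x u : ℕ) {v : ℕ} (hv : v ≠ 0) :
    x ≤ p ^ (u + Nat.log p v) ↔ p ^ Nat.clog p x ≤ p ^ u * v := by
  rw [← Nat.clog_le_iff_le_pow hp, ← Nat.log_pow_mul hp u hv,
    Nat.le_log_iff_pow_le hp (mul_ne_zero (by positivity) hv)]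

/-- Each `v` becomes `v · p ^ (E - log v)` copies of `p ^ log v`: the weight `p ^ E · v` makes all
tail sums scale by `p ^ E`, and `p ^ u · p ^ log v` crosses a threshold `x` exactly when
`p ^ u · v` crosses `p ^ clog x` (`le_pow_add_log_iff`). -/
def powRound (p E : ℕ) (ν : Multiset ℕ) : Multiset ℕ :=
  ν.bind fun v => replicate (v * p ^ (E - Nat.log p v)) (p ^ Nat.log p v)

section powRound

variable {p : ℕ} (E : ℕ) {ν : Multiset ℕ}

theorem powEntries_powRound : PowEntries p (powRound p E ν) := by
  intro y hy
  obtain ⟨v, -, hy⟩ := mem_bind.mp hy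
  exact ⟨_, eq_of_mem_replicate hy⟩

theorem isPartition_powRound (hp : 0 < p) (hν : IsPartition ν) :
    IsPartition (powRound p E ν) := by
  obtain ⟨hν₀, hνpos⟩ := hν
  obtain ⟨v, hv⟩ := exists_mem_of_ne_zero hν₀
  have hmem : p ^ Nat.log p v ∈ powRound p E ν :=
    mem_bind.mpr ⟨v, hv, mem_replicate.mpr ⟨by have := hνpos v hv; positivity, rfl⟩⟩
  refine ⟨fun h₀ => notMem_zero _ (h₀ ▸ hmem), fun y hy => ?_⟩
  obtain ⟨i, rfl⟩ := powEntries_powRound E y hy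
  positivity

theorem tailSum_map_powRound (hp : 1 < p) (hν : ∀ v ∈ ν, 0 < v)
    (hE : ∀ v ∈ ν, Nat.log p v ≤ E) (x u : ℕ) :
    tailSum x ((powRound p E ν).map (p ^ u * ·))
      = p ^ E * tailSum (p ^ Nat.clog p x) (ν.map (p ^ u * ·)) := by
  rw [powRound, map_bind, ← bind_singleton, tailSum_bind, tailSum_bind, ← sum_map_mul_left]
  refine congrArg Multiset.sum (map_congr rfl fun v hv => ?_)
  rw [map_replicate, tailSum_replicate, tailSum_singleton, ← pow_add]
  simp only [le_pow_add_log_iff hp x u (hν v hv).ne']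
  split_ifs
  · calc v * p ^ (E - Nat.log p v) * p ^ (u + Nat.log p v)
        = p ^ (E - Nat.log p v + Nat.log p v) * (p ^ u * v) := by ring
      _ = p ^ E * (p ^ u * v) := by rw [Nat.sub_add_cancel (hE v hv)]
  · rfl

theorem tailSum_mprod_powRound (hp : 1 < p) {X : Multiset ℕ} (hX : PowEntries p X)
    (hν : ∀ v ∈ ν, 0 < v) (hE : ∀ v ∈ ν, Nat.log p v ≤ E) (x : ℕ) :
    tailSum x (mprod X (powRound p E ν)) = p ^ E * tailSum (p ^ Nat.clog p x) (mprod X ν) := by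
  rw [mprod, mprod, tailSum_bind, tailSum_bind, ← sum_map_mul_left]
  refine congrArg Multiset.sum (map_congr rfl fun a ha => ?_)
  obtain ⟨u, rfl⟩ := hX a ha
  exact tailSum_map_powRound E hp hν hE x u

end powRound

theorem stablyEmbeds_iff_exists_supermajorized {p : ℕ} (hp : 1 < p) {A B : Multiset ℕ}
    (hA : PowEntries p A) (hB : PowEntries p B) :
    StablyEmbeds A B ↔ ∃ ν, IsPartition ν ∧ Supermajorized (mprod A ν) (mprod B ν) := by
  refine ⟨fun ⟨ν, hν, h⟩ => ⟨ν, hν, h.supermajorized⟩, fun ⟨ν, hν, h⟩ => ?_⟩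
  set E := Nat.log p ν.sum
  have hE : ∀ v ∈ ν, Nat.log p v ≤ E := fun v hv => Nat.log_mono_right (le_sum_of_mem hv)
  refine ⟨powRound p E ν, isPartition_powRound E (zero_lt_one.trans hp) hν,
    embeds_of_supermajorized hp (hA.mprod (powEntries_powRound E))
      (hB.mprod (powEntries_powRound E)) ?_⟩
  rw [supermajorized_iff_tailSum] at h ⊢
  intro x _
  rw [tailSum_mprod_powRound E hp hA hν.2 hE, tailSum_mprod_powRound E hp hB hν.2 hE]
  exact Nat.mul_le_mul_left _ (h _ (by positivity))

theorem mprod_add_left (X Y ν : Multiset ℕ) : mprod (X + Y) ν = mprod X ν + mprod Y ν :=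
  add_bind _ _ _

theorem stablyEmbeds_add_right_iff {p : ℕ} (hp : 1 < p) {X Y Z : Multiset ℕ}
    (hX : PowEntries p X) (hY : PowEntries p Y) (hZ : PowEntries p Z) :
    StablyEmbeds (X + Z) (Y + Z) ↔ StablyEmbeds X Y := by
  rw [stablyEmbeds_iff_exists_supermajorized hp (hX.add hZ) (hY.add hZ),
    stablyEmbeds_iff_exists_supermajorized hp hX hY]
  simp only [mprod_add_left, supermajorized_add_right_iff]

theorem stmt_13_general (p : ℕ) (hp : 2 ≤ p) (l m : Multiset ℕ)
    (hlp : ∀ x ∈ l, ∃ i : ℕ, x = p ^ i) (hmp : ∀ x ∈ m, ∃ i : ℕ, x = p ^ i)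
    (i : ℕ) (hcount : l.count (p ^ i) ≤ m.count (p ^ i)) :
    StablyEmbeds l m ↔
      StablyEmbeds (l.filter fun x => x ≠ p ^ i)
        (m - Multiset.replicate (l.count (p ^ i)) (p ^ i)) := by
  have hl : (l.filter fun x => x ≠ p ^ i) + replicate (l.count (p ^ i)) (p ^ i) = l := by
    conv_rhs => rw [← filter_add_not (· ≠ p ^ i) l]
    simp [filter_eq']
  have hm : m - replicate (l.count (p ^ i)) (p ^ i) + replicate (l.count (p ^ i)) (p ^ i) = m :=
    tsub_add_cancel_of_le (le_count_iff_replicate_le.mp hcount)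
  conv_lhs => rw [← hl, ← hm]
  exact stablyEmbeds_add_right_iff hp (PowEntries.mono hlp (filter_le _ l))
    (PowEntries.mono hmp tsub_le_self) (.replicate _ i)

/-- Cancellation for stable embeddability in the class of partitions with
entries powers of `p`: if `λ` has `aᵢ ≤ bᵢ` entries equal to `pⁱ`, delete all
of them from `λ` and delete `aᵢ` of the entries `pⁱ` from `μ`; then
`λ s↪ μ` iff the reduced partitions satisfy `λ̃ s↪ μ̃`. -/
theorem stmt_13 (p : ℕ) (hp : 2 ≤ p) (l m : Multiset ℕ)
    (hl : IsPartition l) (hm : IsPartition m)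
    (hlp : ∀ x ∈ l, ∃ i : ℕ, x = p ^ i) (hmp : ∀ x ∈ m, ∃ i : ℕ, x = p ^ i)
    (i : ℕ) (hcount : l.count (p ^ i) ≤ m.count (p ^ i)) :
    StablyEmbeds l m ↔
      StablyEmbeds (l.filter fun x => x ≠ p ^ i)
        (m - Multiset.replicate (l.count (p ^ i)) (p ^ i)) :=
  stmt_13_general p hp l m hlp hmp i hcount
end

section
/- Let λ₁ = [2,2,2,2] and μ₁ = [4,1,1,1,1,1,1,1,1] (one 4 and eight 1's). Then: (a) λ₁ stably embeds into μ₁; in fact for ν = [2,1,1], the product λ₁×ν = [4,4,4,4,2,2,2,2,2,2,2,2] embeds into μ₁×ν = [8,4,4,2,2,2,2,2,2,2,2,1,…,1] (with sixteen 1's); (b) λ₁ is not supermajorized by μ₁, since ∑_{(λ₁)_i ≥ 2} (λ₁)_i = 8 > 4 = ∑_{(μ₁)_j ≥ 2} (μ₁)_j; and (c) λ₁ does not embed into μ₁. Hence stable embeddability implies neither supermajorization nor embeddability. -/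
lemma sum_sum_map_aux (T : Multiset (Multiset ℕ × ℕ)) :
    (T.map Prod.fst).sum.sum = (T.map fun q => q.1.sum).sum := by
  induction T using Multiset.induction with
  | empty => simp
  | cons a s ih => simp [ih]

lemma not_embeds_aux : ¬ Embeds ({2,2,2,2} : Multiset ℕ) ({4,1,1,1,1,1,1,1,1} : Multiset ℕ) := by
  rintro ⟨T, h1, h2, h3⟩
  have hmem : ∀ q ∈ T, ∀ x ∈ q.1, x = 2 := by
    intro q hq x hx
    have hle : q.1 ≤ (T.map Prod.fst).sum :=
      Multiset.le_sum_of_mem (Multiset.mem_map_of_mem _ hq)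
    have hxl : x ∈ ({2,2,2,2} : Multiset ℕ) := h1 ▸ Multiset.mem_of_le hle hx
    simpa using hxl
  have hzero : ∀ q ∈ T, q.2 = 1 → q.1.sum = 0 := by
    intro q hq hq2
    by_contra h
    have hne : q.1 ≠ 0 := fun h0 => h (by simp [h0])
    obtain ⟨x, hx⟩ := Multiset.exists_mem_of_ne_zero hne
    have hx2 := hmem q hq x hx
    have h2le : 2 ≤ q.1.sum := hx2 ▸ Multiset.single_le_sum (fun _ _ => Nat.zero_le _) x hx
    have := h3 q hq
    omega
  have key : (T.map fun q => q.1.sum).sum ≤ (T.map fun q => if q.2 = 4 then 4 else 0).sum := by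
    apply Multiset.sum_map_le_sum_map
    intro q hq
    have hq2 : q.2 ∈ ({4,1,1,1,1,1,1,1,1} : Multiset ℕ) := h2 ▸ Multiset.mem_map_of_mem _ hq
    have hcases : q.2 = 4 ∨ q.2 = 1 := by
      simp only [Multiset.insert_eq_cons, Multiset.mem_cons, Multiset.mem_singleton] at hq2
      tauto
    rcases hcases with h4 | h1'
    · simpa [h4] using h4 ▸ h3 q hq
    · have := hzero q hq h1'
      simp [h1', this]
  have hrhs : (T.map fun q => if q.2 = 4 then 4 else 0).sum = 4 := by
    have heq : (T.map fun q => if q.2 = 4 then 4 else 0)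
        = (T.map Prod.snd).map (fun b => if b = 4 then 4 else 0) := by
      rw [Multiset.map_map]; rfl
    rw [heq, h2]; decide
  have hlhs : (T.map fun q => q.1.sum).sum = 8 := by
    rw [← sum_sum_map_aux, h1]; decide
  omega

/-- Example: `λ₁ = [2,2,2,2]`, `μ₁ = [4,1,1,1,1,1,1,1,1]`. With `ν = [2,1,1]`,
`λ₁×ν = [4,4,4,4,2,…,2]` embeds into `μ₁×ν = [8,4,4,2,…,2,1,…,1]`, so
`λ₁ s↪ μ₁`; but `λ₁ ⋠_S μ₁` (the sums of entries `≥ 2` are `8 > 4`) and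
`λ₁ ↪̸ μ₁`. -/
theorem stmt_14 :
    let l : Multiset ℕ := {2, 2, 2, 2}
    let m : Multiset ℕ := {4, 1, 1, 1, 1, 1, 1, 1, 1}
    let ν : Multiset ℕ := {2, 1, 1}
    mprod l ν = ({4, 4, 4, 4} : Multiset ℕ) + Multiset.replicate 8 2 ∧
    mprod m ν = ({8, 4, 4} : Multiset ℕ) + Multiset.replicate 8 2 +
      Multiset.replicate 16 1 ∧
    Embeds (mprod l ν) (mprod m ν) ∧
    StablyEmbeds l m ∧
    (l.filter fun a => 2 ≤ a).sum = 8 ∧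
    (m.filter fun a => 2 ≤ a).sum = 4 ∧
    ¬ Supermajorized l m ∧
    ¬ Embeds l m := by
  intro l m ν
  have hemb : Embeds (mprod l ν) (mprod m ν) := by
    refine ⟨({({4,4},8), ({4},4), ({4},4)} : Multiset (Multiset ℕ × ℕ))
      + Multiset.replicate 8 ({2},2) + Multiset.replicate 16 (0,1), ?_, ?_, ?_⟩ <;> decide
  refine ⟨by decide, by decide, hemb, ⟨ν, ⟨by decide, by decide⟩, hemb⟩, by decide, by decide, ?_, not_embeds_aux⟩
  intro h
  have := h 2 two_pos
  simp only [show (l.filter fun a => 2 ≤ a).sum = 8 from by decide,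
    show (m.filter fun a => 2 ≤ a).sum = 4 from by decide] at this
  omega
end

section
/- Let λ₁ = [2,2,2,2] and μ₂ = [3,3,3]. Then λ₁ is supermajorized by μ₂, but λ₁ does not embed into μ₂. Hence supermajorization does not imply embeddability. -/
lemma myMemSum {a : ℕ} {t : Multiset ℕ} {S : Multiset (Multiset ℕ)}
    (ht : t ∈ S) (ha : a ∈ t) : a ∈ S.sum := by
  induction S using Multiset.induction with
  | empty => simp at ht
  | cons b S ih =>
    rw [Multiset.sum_cons, Multiset.mem_add]
    rcases Multiset.mem_cons.mp ht with rfl | h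
    · exact Or.inl ha
    · exact Or.inr (ih h)

lemma myCardSum (S : Multiset (Multiset ℕ)) :
    S.sum.card = (S.map Multiset.card).sum := by
  induction S using Multiset.induction with
  | empty => simp
  | cons b S ih => simp [ih]

/-- Example: `λ₁ = [2,2,2,2]` is supermajorized by `μ₂ = [3,3,3]`, but does
not embed into it. -/
theorem stmt_15 :
    Supermajorized ({2, 2, 2, 2} : Multiset ℕ) ({3, 3, 3} : Multiset ℕ) ∧
    ¬ Embeds ({2, 2, 2, 2} : Multiset ℕ) ({3, 3, 3} : Multiset ℕ) := by
  constructor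
  · intro x hx
    rcases le_or_gt x 3 with h | h
    · interval_cases x <;> decide
    · have h2 : Multiset.filter (fun a => x ≤ a) ({2, 2, 2, 2} : Multiset ℕ) = 0 := by
        rw [Multiset.filter_eq_nil]
        intro a ha
        simp only [Multiset.insert_eq_cons, Multiset.mem_cons, Multiset.mem_singleton] at ha
        omega
      have h3 : Multiset.filter (fun a => x ≤ a) ({3, 3, 3} : Multiset ℕ) = 0 := by
        rw [Multiset.filter_eq_nil]
        intro a ha
        simp only [Multiset.insert_eq_cons, Multiset.mem_cons, Multiset.mem_singleton] at ha
        omega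
      rw [h2, h3]
  · rintro ⟨T, hsum, hsnd, hfit⟩
    have hcardT : T.card = 3 := by
      have := congrArg Multiset.card hsnd
      simpa using this
    have hmem : ∀ q ∈ T, q.1.card ≤ 1 := by
      intro q hq
      by_contra hc
      push_neg at hc
      have hall : ∀ a ∈ q.1, a = 2 := by
        intro a ha
        have h1 : a ∈ (T.map Prod.fst).sum := by
          exact myMemSum (Multiset.mem_map_of_mem _ hq) ha
        rw [hsum] at h1
        simp only [Multiset.insert_eq_cons, Multiset.mem_cons, Multiset.mem_singleton] at h1
        rcases h1 with h|h|h|h <;> omega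
      have hrep : q.1 = Multiset.replicate q.1.card 2 :=
        Multiset.eq_replicate_card.mpr hall
      have hs : q.1.sum = 2 * q.1.card := by
        rw [hrep]; simp [Multiset.sum_replicate, mul_comm]
      have := hfit q hq
      have hq2 : q.2 = 3 := by
        have : q.2 ∈ T.map Prod.snd := Multiset.mem_map_of_mem _ hq
        rw [hsnd] at this
        simp only [Multiset.insert_eq_cons, Multiset.mem_cons, Multiset.mem_singleton] at this
        tauto
      omega
    have hcard : ((T.map Prod.fst).sum).card = 4 := by
      rw [hsum]; decide
    have hbound : ((T.map Prod.fst).sum).card ≤ 3 := by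
      rw [myCardSum]
      calc (T.map Prod.fst |>.map Multiset.card).sum
          ≤ (T.map Prod.fst |>.map Multiset.card).card * 1 := by
            apply Multiset.sum_le_card_nsmul
            intro a ha
            simp only [Multiset.map_map, Multiset.mem_map] at ha
            obtain ⟨q, hq, rfl⟩ := ha
            exact hmem q hq
        _ = 3 := by simp [hcardT]
    omega
end

section
/- Let λ₃ = [4,2,2] and μ₄ = [5,3]. Then λ₃ is supermajorized by μ₄, but λ₃ does not stably embed into μ₄: there is no partition ν = [ν₁, …, ν_n] with λ₃×ν ↪ μ₄×ν. Hence supermajorization does not imply stable embeddability. -/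
/-!
Since `‖λ×ν‖₁ = ‖λ‖₁ ‖ν‖₁`, an embedding `λ×ν ↪ μ×ν` between partitions of equal sum must fill
every bin exactly, so each entry of `μ×ν` is a sum of entries of `λ×ν`. Hence
`gcd λ · gcd ν = gcd (λ×ν)` divides `gcd (μ×ν) = gcd μ · gcd ν`, and cancelling `gcd ν > 0` gives
`gcd λ ∣ gcd μ`. For `λ₃ = [4,2,2]` and `μ₄ = [5,3]` (both of sum 8) this would say `2 ∣ 1`.
-/

lemma mprod_sum (l ν : Multiset ℕ) : (mprod l ν).sum = l.sum * ν.sum := by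
  have h : ∀ a, (ν.map (a * ·)).sum = a * ν.sum := fun a => by
    simpa using Multiset.sum_map_mul_left (s := ν) (a := a) (f := id)
  simp only [mprod, Multiset.sum_bind, h, Multiset.sum_map_mul_right, Multiset.map_id']

lemma Multiset.eq_of_sum_map_eq_of_le {ι M : Type*} [AddCommMonoid M] [PartialOrder M]
    [IsOrderedCancelAddMonoid M] {s : Multiset ι} {f g : ι → M}
    (hle : ∀ x ∈ s, f x ≤ g x) (hsum : (s.map f).sum = (s.map g).sum) :
    ∀ x ∈ s, f x = g x := by
  intro x hx
  by_contra hne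
  exact (Multiset.sum_lt_sum hle ⟨x, hx, lt_of_le_of_ne (hle x hx) hne⟩).ne hsum

lemma Embeds.gcd_dvd_gcd_of_sum_eq {l m : Multiset ℕ} (h : Embeds l m) (hsum : l.sum = m.sum) :
    l.gcd ∣ m.gcd := by
  obtain ⟨T, rfl, rfl, hle⟩ := h
  have hfill : ∀ q ∈ T, q.1.sum = q.2 := by
    refine Multiset.eq_of_sum_map_eq_of_le hle ?_
    calc (T.map fun q => q.1.sum).sum = ((T.map Prod.fst).map Multiset.sum).sum := by
          rw [Multiset.map_map]; rfl
      _ = (T.map Prod.snd).sum := Multiset.sum_join.symm.trans hsum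
  refine Multiset.dvd_gcd.2 fun b hb => ?_
  obtain ⟨q, hq, rfl⟩ := Multiset.mem_map.1 hb
  rw [← hfill q hq]
  refine Multiset.dvd_sum fun x hx => Multiset.gcd_dvd ?_
  exact Multiset.mem_join.2 ⟨q.1, Multiset.mem_map_of_mem _ hq, hx⟩

lemma gcd_mprod (l ν : Multiset ℕ) : (mprod l ν).gcd = l.gcd * ν.gcd := by
  induction l using Multiset.induction with
  | empty => simp [mprod]
  | cons a l ih =>
    rw [mprod, Multiset.cons_bind, Multiset.gcd_add, ← mprod, ih, Multiset.gcd_map_mul,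
      Multiset.gcd_cons, normalize_eq, gcd_eq_nat_gcd, gcd_eq_nat_gcd, Nat.gcd_mul_right]

lemma IsPartition.gcd_pos {ν : Multiset ℕ} (h : IsPartition ν) : 0 < ν.gcd := by
  obtain ⟨hne, hpos⟩ := h
  obtain ⟨a, ha⟩ := Multiset.exists_mem_of_ne_zero hne
  exact Nat.pos_of_ne_zero ((Multiset.gcd_ne_zero_iff ν).2 ⟨a, ha, (hpos a ha).ne'⟩)

lemma StablyEmbeds.gcd_dvd_gcd_of_sum_eq {l m : Multiset ℕ} (h : StablyEmbeds l m)
    (hsum : l.sum = m.sum) : l.gcd ∣ m.gcd := by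
  obtain ⟨ν, hν, hemb⟩ := h
  have hdvd := hemb.gcd_dvd_gcd_of_sum_eq (by rw [mprod_sum, mprod_sum, hsum])
  rw [gcd_mprod, gcd_mprod] at hdvd
  exact Nat.dvd_of_mul_dvd_mul_right hν.gcd_pos hdvd

/-- Example: `λ₃ = [4,2,2]` is supermajorized by `μ₄ = [5,3]`, but `λ₃` does
not stably embed into `μ₄`: no partition `ν` satisfies `λ₃×ν ↪ μ₄×ν`. -/
theorem stmt_17 :
    Supermajorized ({4, 2, 2} : Multiset ℕ) ({5, 3} : Multiset ℕ) ∧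
    ¬ StablyEmbeds ({4, 2, 2} : Multiset ℕ) ({5, 3} : Multiset ℕ) := by
  refine ⟨fun x hx => ?_, fun h => ?_⟩
  · rcases le_or_gt x 4 with hx4 | hx4
    · interval_cases x <;> decide
    · have hempty : ({4, 2, 2} : Multiset ℕ).filter (x ≤ ·) = 0 :=
        Multiset.filter_eq_nil.2 fun a ha => by fin_cases ha <;> omega
      rw [hempty]
      exact Nat.zero_le _
  · exact absurd (h.gcd_dvd_gcd_of_sum_eq rfl) (by decide)
end
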